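/- arXiv:1502.00095 — 6 statements merged into one kernel-verified Lean document; each statement's English description precedes it below -/
import Mathlib

section
/- Let 1 < p ≤ 2 and let (Y_j)_{1≤j≤n} be a martingale difference sequence (i.e. E[Y_j | Y_1,…,Y_{j−1}] = 0 for j = 2,…,n) with E|Y_j|^p < ∞ for every j. Then E|Σ_{j=1}^n Y_j|^p ≤ 2 Σ_{j=1}^n E|Y_j|^p. -/
/-!
For `1 < p ≤ 2` and `q = p - 1`, the signed power `φ(x) = sign x · |x|^q` is the derivative of
`|x|^p / p` and is `q`-Hölder with constant `2`. Integrating this along `t ↦ x + t y` gives the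
pointwise bound `|x + y|^p ≤ |x|^p + p φ(x) y + 2|y|^p`. Applied to `x = Y_1 + ⋯ + Y_{k-1}` and
`y = Y_k`, the middle term has expectation zero because `E[Y_k | Y_1, …, Y_{k-1}] = 0`, so
`E|Y_1 + ⋯ + Y_k|^p ≤ E|Y_1 + ⋯ + Y_{k-1}|^p + 2 E|Y_k|^p`, and the theorem follows by induction.
-/

open MeasureTheory ProbabilityTheory

noncomputable def signedRpow (q x : ℝ) : ℝ := Real.sign x * |x| ^ q

section SignedRpow

variable {q : ℝ}

lemma signedRpow_of_nonneg (hq : 0 < q) {x : ℝ} (hx : 0 ≤ x) : signedRpow q x = x ^ q := by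
  rcases hx.eq_or_lt with rfl | hx
  · simp [signedRpow, Real.zero_rpow hq.ne']
  · rw [signedRpow, Real.sign_of_pos hx, abs_of_pos hx, one_mul]

lemma signedRpow_neg (q x : ℝ) : signedRpow q (-x) = -signedRpow q x := by
  simp [signedRpow, Real.sign_neg]

lemma signedRpow_of_nonpos (hq : 0 < q) {x : ℝ} (hx : x ≤ 0) : signedRpow q x = -(-x) ^ q := by
  rw [← signedRpow_of_nonneg hq (neg_nonneg.2 hx), signedRpow_neg, neg_neg]

lemma abs_signedRpow (hq : 0 < q) (x : ℝ) : |signedRpow q x| = |x| ^ q := by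
  rcases le_total 0 x with hx | hx
  · rw [signedRpow_of_nonneg hq hx, abs_of_nonneg hx, abs_of_nonneg (by positivity)]
  · rw [signedRpow_of_nonpos hq hx, abs_neg, abs_of_nonpos hx,
      abs_of_nonneg (Real.rpow_nonneg (neg_nonneg.2 hx) q)]

lemma signedRpow_add_one (q x : ℝ) : signedRpow (q + 1) x = |x| ^ q * x := by
  rcases lt_trichotomy x 0 with hx | rfl | hx
  · rw [signedRpow, Real.sign_of_neg hx, Real.rpow_add_one (abs_ne_zero.2 hx.ne), abs_of_neg hx]
    ring
  · simp [signedRpow]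
  · rw [signedRpow, Real.sign_of_pos hx, Real.rpow_add_one (abs_ne_zero.2 hx.ne'),
      abs_of_pos hx, one_mul]

lemma monotone_signedRpow (hq : 0 < q) : Monotone (signedRpow q) := by
  intro b a hab
  rcases le_total 0 b with hb | hb
  · rw [signedRpow_of_nonneg hq hb, signedRpow_of_nonneg hq (hb.trans hab)]
    exact Real.rpow_le_rpow hb hab hq.le
  rcases le_total a 0 with ha | ha
  · rw [signedRpow_of_nonpos hq hb, signedRpow_of_nonpos hq ha, neg_le_neg_iff]
    exact Real.rpow_le_rpow (neg_nonneg.2 ha) (neg_le_neg hab) hq.le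
  · rw [signedRpow_of_nonpos hq hb, signedRpow_of_nonneg hq ha]
    have := Real.rpow_nonneg (neg_nonneg.2 hb) q
    have := Real.rpow_nonneg ha q
    linarith

lemma signedRpow_sub_le_of_nonneg (hq0 : 0 < q) (hq1 : q ≤ 1) {a b : ℝ} (hb : 0 ≤ b)
    (hab : b ≤ a) : signedRpow q a - signedRpow q b ≤ (a - b) ^ q := by
  rw [signedRpow_of_nonneg hq0 hb, signedRpow_of_nonneg hq0 (hb.trans hab), sub_le_iff_le_add]
  simpa using Real.rpow_add_le_add_rpow (sub_nonneg.2 hab) hb hq0.le hq1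

lemma signedRpow_sub_le (hq0 : 0 < q) (hq1 : q ≤ 1) {a b : ℝ} (hab : b ≤ a) :
    signedRpow q a - signedRpow q b ≤ 2 * (a - b) ^ q := by
  have hab' : 0 ≤ (a - b) ^ q := Real.rpow_nonneg (sub_nonneg.2 hab) q
  rcases le_total 0 b with hb | hb
  · linarith [signedRpow_sub_le_of_nonneg hq0 hq1 hb hab]
  rcases le_total a 0 with ha | ha
  · have := signedRpow_sub_le_of_nonneg hq0 hq1 (neg_nonneg.2 ha) (neg_le_neg hab)
    rw [signedRpow_neg, signedRpow_neg, neg_sub_neg, neg_sub_neg] at this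
    linarith
  · -- the only case needing the constant `2`: with opposite signs, `|a|, |b| ≤ a - b`
    rw [signedRpow_of_nonneg hq0 ha, signedRpow_of_nonpos hq0 hb]
    have := Real.rpow_le_rpow ha (by linarith : a ≤ a - b) hq0.le
    have := Real.rpow_le_rpow (neg_nonneg.2 hb) (by linarith : -b ≤ a - b) hq0.le
    linarith

lemma abs_signedRpow_sub_le (hq0 : 0 < q) (hq1 : q ≤ 1) (a b : ℝ) :
    |signedRpow q a - signedRpow q b| ≤ 2 * |a - b| ^ q := by
  wlog hab : b ≤ a generalizing a b
  · rw [abs_sub_comm, abs_sub_comm a]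
    exact this b a (le_of_not_ge hab)
  rw [abs_of_nonneg (sub_nonneg.2 (monotone_signedRpow hq0 hab)),
    abs_of_nonneg (sub_nonneg.2 hab)]
  exact signedRpow_sub_le hq0 hq1 hab

end SignedRpow

section Pointwise

variable {p : ℝ}

lemma hasDerivAt_abs_rpow_signedRpow (hp : 1 < p) (x : ℝ) :
    HasDerivAt (fun t : ℝ => |t| ^ p) (p * signedRpow (p - 1) x) x := by
  convert hasDerivAt_abs_rpow x hp using 1
  rw [show p - 1 = p - 2 + 1 by ring, signedRpow_add_one, mul_assoc]

lemma mul_signedRpow_sub_le (hp1 : 1 < p) (hp2 : p ≤ 2) (x y : ℝ) {t : ℝ} (ht : 0 ≤ t) :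
    y * (signedRpow (p - 1) (x + t * y) - signedRpow (p - 1) x) ≤ 2 * |y| ^ p * t ^ (p - 1) := by
  have hq0 : 0 < p - 1 := by linarith
  calc y * (signedRpow (p - 1) (x + t * y) - signedRpow (p - 1) x)
      ≤ |y| * |signedRpow (p - 1) (x + t * y) - signedRpow (p - 1) x| := by
        rw [← abs_mul]; exact le_abs_self _
    _ ≤ |y| * (2 * |t * y| ^ (p - 1)) := by
        gcongr
        simpa using abs_signedRpow_sub_le hq0 (by linarith) (x + t * y) x
    _ = 2 * (|y| ^ (p - 1) * |y|) * t ^ (p - 1) := by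
        rw [abs_mul, abs_of_nonneg ht, Real.mul_rpow ht (abs_nonneg y)]; ring
    _ = 2 * |y| ^ p * t ^ (p - 1) := by
        rw [← Real.rpow_add_one' (abs_nonneg y) (by linarith), sub_add_cancel]

lemma abs_add_rpow_le (hp1 : 1 < p) (hp2 : p ≤ 2) (x y : ℝ) :
    |x + y| ^ p ≤ |x| ^ p + p * signedRpow (p - 1) x * y + 2 * |y| ^ p := by
  -- `F` vanishes at `0` and is nondecreasing on `[0, ∞)`; its value at `1` is the claim
  set F : ℝ → ℝ := fun t => |x| ^ p + 2 * |y| ^ p * t ^ p + t * (p * signedRpow (p - 1) x * y)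
    - |x + t * y| ^ p with hF
  have hderiv (t : ℝ) (ht : 0 < t) : HasDerivAt F (2 * |y| ^ p * (p * t ^ (p - 1))
      + p * signedRpow (p - 1) x * y - p * signedRpow (p - 1) (x + t * y) * y) t := by
    have hline : HasDerivAt (fun t : ℝ => x + t * y) y t := by
      simpa using ((hasDerivAt_id t).mul_const y).const_add x
    have := (hasDerivAt_abs_rpow_signedRpow hp1 (x + t * y)).comp t hline
    have := ((((Real.hasDerivAt_rpow_const (p := p) (Or.inl ht.ne')).const_mul
      (2 * |y| ^ p)).const_add (|x| ^ p)).add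
      ((hasDerivAt_id t).mul_const (p * signedRpow (p - 1) x * y))).sub this
    exact this.congr_deriv (by ring)
  have hcont : Continuous F := by
    have := Real.continuous_rpow_const (by linarith : 0 ≤ p)
    fun_prop
  have hmono : MonotoneOn F (Set.Ici 0) := by
    refine monotoneOn_of_hasDerivWithinAt_nonneg (convex_Ici 0) hcont.continuousOn
      (fun t ht => (hderiv t (by simpa using ht)).hasDerivWithinAt) fun t ht => ?_
    have ht : 0 < t := by simpa using ht
    have := mul_le_mul_of_nonneg_left (mul_signedRpow_sub_le hp1 hp2 x y ht.le)
      (zero_le_one.trans hp1.le)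
    linarith
  have h01 : F 0 ≤ F 1 := hmono Set.self_mem_Ici (zero_le_one' ℝ) zero_le_one
  simp only [hF, Real.zero_rpow (by linarith : p ≠ 0), mul_zero, add_zero, zero_mul, sub_self,
    Real.one_rpow, mul_one, one_mul, sub_nonneg] at h01
  linarith

end Pointwise

section Integral

variable {Ω : Type*} {m m0 : MeasurableSpace Ω} {μ : Measure Ω} {p : ℝ} {S Y : Ω → ℝ}

lemma MeasureTheory.MemLp.integrable_abs_rpow (hp : 0 < p) (hS : MemLp S (ENNReal.ofReal p) μ) :
    Integrable (fun ω => |S ω| ^ p) μ := by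
  simpa [ENNReal.toReal_ofReal hp.le] using
    hS.integrable_norm_rpow (by simpa using hp) ENNReal.ofReal_ne_top

lemma memLp_signedRpow_comp (hp : 1 < p) (hS : MemLp S (ENNReal.ofReal p) μ) :
    MemLp (fun ω => signedRpow (p - 1) (S ω)) (ENNReal.ofReal p.conjExponent) μ := by
  have hq : 0 < p - 1 := by linarith
  have := hS.norm_rpow_div (ENNReal.ofReal (p - 1))
  rw [ENNReal.toReal_ofReal hq.le, ← ENNReal.ofReal_div_of_pos hq] at this
  refine this.congr_norm
    ((monotone_signedRpow hq).measurable.comp_aemeasurable hS.1.aemeasurable).aestronglyMeasurable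
    (ae_of_all _ fun ω => ?_)
  simp [abs_signedRpow hq, Real.rpow_nonneg]

lemma integrable_signedRpow_mul (hp : 1 < p) (hS : MemLp S (ENNReal.ofReal p) μ)
    (hY : MemLp Y (ENNReal.ofReal p) μ) :
    Integrable (fun ω => signedRpow (p - 1) (S ω) * Y ω) μ :=
  have := (Real.HolderConjugate.conjExponent hp).symm.ennrealOfReal
  (memLp_signedRpow_comp hp hS).integrable_mul hY

lemma integral_abs_add_rpow_le (hp1 : 1 < p) (hp2 : p ≤ 2) (hS : MemLp S (ENNReal.ofReal p) μ)
    (hY : MemLp Y (ENNReal.ofReal p) μ) :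
    ∫ ω, |S ω + Y ω| ^ p ∂μ ≤ ∫ ω, |S ω| ^ p ∂μ
      + p * ∫ ω, signedRpow (p - 1) (S ω) * Y ω ∂μ + 2 * ∫ ω, |Y ω| ^ p ∂μ := by
  have hp : 0 < p := by linarith
  have hSp := hS.integrable_abs_rpow hp
  have hYp := hY.integrable_abs_rpow hp
  have hcross := integrable_signedRpow_mul hp1 hS hY
  have hSc : Integrable (fun ω => |S ω| ^ p + p * (signedRpow (p - 1) (S ω) * Y ω)) μ :=
    hSp.add (hcross.const_mul p)
  calc ∫ ω, |S ω + Y ω| ^ p ∂μ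
      ≤ ∫ ω, (|S ω| ^ p + p * (signedRpow (p - 1) (S ω) * Y ω) + 2 * |Y ω| ^ p) ∂μ := by
        refine integral_mono ((hS.add hY).integrable_abs_rpow hp)
          (hSc.add (hYp.const_mul 2)) fun ω => ?_
        have := abs_add_rpow_le hp1 hp2 (S ω) (Y ω)
        dsimp only
        linarith
    _ = _ := by
        rw [integral_add hSc (hYp.const_mul 2),
          integral_add hSp (hcross.const_mul p), integral_const_mul, integral_const_mul]

lemma integral_mul_eq_zero_of_condExp_eq_zero (hm : m ≤ m0) [SigmaFinite (μ.trim hm)]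
    {f g : Ω → ℝ} (hf : StronglyMeasurable[m] f) (hfg : Integrable (f * g) μ)
    (hg : Integrable g μ) (hg0 : μ[g | m] =ᵐ[μ] 0) : ∫ ω, f ω * g ω ∂μ = 0 := by
  have hfg0 : μ[f * g | m] =ᵐ[μ] 0 := by
    filter_upwards [condExp_mul_of_stronglyMeasurable_left hf hfg hg, hg0] with ω h h0
    simp [h, h0]
  calc ∫ ω, f ω * g ω ∂μ = ∫ ω, (μ[f * g | m]) ω ∂μ := (integral_condExp hm).symm
    _ = 0 := by simp [integral_congr_ae hfg0]

lemma integral_abs_add_rpow_le_of_condExp_eq_zero [IsFiniteMeasure μ] (hp1 : 1 < p)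
    (hp2 : p ≤ 2) (hm : m ≤ m0) (hS : MemLp S (ENNReal.ofReal p) μ) (hSm : Measurable[m] S)
    (hY : MemLp Y (ENNReal.ofReal p) μ) (hY0 : μ[Y | m] =ᵐ[μ] 0) :
    ∫ ω, |S ω + Y ω| ^ p ∂μ ≤ ∫ ω, |S ω| ^ p ∂μ + 2 * ∫ ω, |Y ω| ^ p ∂μ := by
  have hcross : ∫ ω, signedRpow (p - 1) (S ω) * Y ω ∂μ = 0 :=
    integral_mul_eq_zero_of_condExp_eq_zero hm
      ((monotone_signedRpow (by linarith)).measurable.comp hSm).stronglyMeasurable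
      (integrable_signedRpow_mul hp1 hS hY) (hY.integrable (ENNReal.one_le_ofReal.2 hp1.le)) hY0
  simpa [hcross] using integral_abs_add_rpow_le hp1 hp2 hS hY

theorem integral_abs_sum_rpow_le_of_condExp_eq_zero [IsFiniteMeasure μ] (hp1 : 1 < p)
    (hp2 : p ≤ 2) {n : ℕ} (Y : Fin n → Ω → ℝ) (ℱ : Fin n → MeasurableSpace Ω)
    (hℱ : ∀ j, ℱ j ≤ m0) (hadapted : ∀ i j, i < j → Measurable[ℱ j] (Y i))
    (hLp : ∀ j, MemLp (Y j) (ENNReal.ofReal p) μ)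
    (hmd : ∀ j : Fin n, 0 < (j : ℕ) → μ[Y j | ℱ j] =ᵐ[μ] 0) :
    ∫ ω, |∑ j, Y j ω| ^ p ∂μ ≤ 2 * ∑ j, ∫ ω, |Y j ω| ^ p ∂μ := by
  induction n with
  | zero => simp [Real.zero_rpow (by linarith : p ≠ 0)]
  | succ n ih =>
    simp only [Fin.sum_univ_castSucc]
    rcases Nat.eq_zero_or_pos n with rfl | hn
    · have : 0 ≤ ∫ ω, |Y (Fin.last 0) ω| ^ p ∂μ := integral_nonneg fun ω => by positivity
      simp only [Finset.univ_eq_empty, Finset.sum_empty, zero_add]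
      linarith
    have hprev := ih (fun j => Y j.castSucc) (fun j => ℱ j.castSucc) (fun j => hℱ _)
      (fun i j hij => hadapted _ _ (Fin.castSucc_lt_castSucc_iff.2 hij)) (fun j => hLp _)
      (fun j hj => hmd _ hj)
    have hlast := integral_abs_add_rpow_le_of_condExp_eq_zero hp1 hp2 (hℱ (Fin.last n))
      (memLp_finsetSum Finset.univ fun j _ => hLp j.castSucc)
      (Finset.measurable_fun_sum Finset.univ fun j _ => hadapted _ _ (Fin.castSucc_lt_last j))
      (hLp (Fin.last n)) (hmd _ hn)
    linarith

end Integral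

/-- **von Bahr–Esséen inequality for martingale differences** (Proposition 1 and Remark 1 of
the paper, case `1 < p ≤ 2`, with explicit constant `K_p = 2`):
if `(Y_j)_{1 ≤ j ≤ n}` are real random variables with `E|Y_j|^p < ∞` and
`E[Y_j | Y_1, …, Y_{j-1}] = 0` for `j = 2, …, n`, then
`E|∑_{j=1}^n Y_j|^p ≤ 2 ∑_{j=1}^n E|Y_j|^p`. -/
theorem vonBahr_Esseen_martingale_difference
    {Ω : Type*} [MeasureSpace Ω] [IsProbabilityMeasure (ℙ : Measure Ω)]
    (p : ℝ) (hp1 : 1 < p) (hp2 : p ≤ 2)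
    (n : ℕ) (Y : Fin n → Ω → ℝ)
    (hmeas : ∀ j, Measurable (Y j))
    (hLp : ∀ j, MemLp (Y j) (ENNReal.ofReal p) (ℙ : Measure Ω))
    (hmd : ∀ j : Fin n, 0 < (j : ℕ) →
      (ℙ : Measure Ω)[Y j |
          ⨆ (i : Fin n) (_ : i < j), MeasurableSpace.comap (Y i) inferInstance]
        =ᵐ[(ℙ : Measure Ω)] 0) :
    ∫ ω, |∑ j, Y j ω| ^ p ∂(ℙ : Measure Ω) ≤
      2 * ∑ j, ∫ ω, |Y j ω| ^ p ∂(ℙ : Measure Ω) :=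
  integral_abs_sum_rpow_le_of_condExp_eq_zero hp1 hp2 Y _
    (fun _ => iSup₂_le fun i _ => (hmeas i).comap_le)
    (fun i _ hij => Measurable.of_comap_le (le_iSup₂_of_le i hij le_rfl))
    hLp hmd
end

section
/- Let (α_j)_{j≥1} be nonnegative reals with A := Σ_{j≥1} α_j < 1 and α_j ≤ c j^{−γ} for all j ≥ 1, for some c > 0 and γ > 1. Define A_k := α_k + Σ_{0<p<k} Σ_{0<i_1<…<i_p<k} α_{i_1} α_{i_2−i_1} ⋯ α_{i_p−i_{p−1}} α_{k−i_p} for k ≥ 1 (equivalently, A_k = Σ over all m ≥ 1 and all compositions j_1+…+j_m = k with j_i ≥ 1 of α_{j_1}⋯α_{j_m}). Then there exists C > 0 such that A_k ≤ C k^{−γ} for all k ≥ 1. -/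
/-- The renewal-type sequence generated by `(α_j)`:
`A_k = α_k + ∑_{0<i<k} α_i A_{k-i}`, equivalently
`A_k = α_k + ∑_{0<p<k} ∑_{0<i_1<…<i_p<k} α_{i_1} α_{i_2-i_1} ⋯ α_{k-i_p}`. -/
noncomputable def renewalSeq (α : ℕ → ℝ) : ℕ → ℝ
  | k => α k + ∑ i ∈ (Finset.Ioo 0 k).attach, α i.1 * renewalSeq α (k - i.1)
termination_by k => k
decreasing_by
  have hi := i.2
  simp only [Finset.mem_Ioo] at hi
  omega

lemma renewalSeq_eq (α : ℕ → ℝ) (k : ℕ) :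
    renewalSeq α k = α k + ∑ i ∈ Finset.Ioo 0 k, α i * renewalSeq α (k - i) := by
  rw [renewalSeq]
  congr 1
  exact Finset.sum_attach (Finset.Ioo 0 k) (fun i => α i * renewalSeq α (k - i))

lemma renewalSeq_nonneg (α : ℕ → ℝ) (hnn : ∀ j : ℕ, 1 ≤ j → 0 ≤ α j) :
    ∀ k : ℕ, 1 ≤ k → 0 ≤ renewalSeq α k := by
  intro k
  induction k using Nat.strong_induction_on with
  | _ k ih =>
    intro hk
    rw [renewalSeq_eq]
    have h1 : 0 ≤ α k := hnn k hk
    have h2 : 0 ≤ ∑ i ∈ Finset.Ioo 0 k, α i * renewalSeq α (k - i) :=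
      Finset.sum_nonneg fun i hi => by
        simp only [Finset.mem_Ioo] at hi
        exact mul_nonneg (hnn i hi.1) (ih (k - i) (by omega) (by omega))
    linarith

lemma Icc_sum_eq_range (g : ℕ → ℝ) (n : ℕ) :
    ∑ i ∈ Finset.Icc 1 n, g i = ∑ j ∈ Finset.range n, g (j + 1) := by
  induction n with
  | zero => simp
  | succ n ih =>
    rw [Finset.sum_range_succ, ← ih, Finset.sum_Icc_succ_top (by omega)]

lemma alpha_partial_le (α : ℕ → ℝ) (hnn : ∀ j : ℕ, 1 ≤ j → 0 ≤ α j)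
    (hsum : Summable (fun j : ℕ => α (j + 1))) (n : ℕ) :
    ∑ i ∈ Finset.Icc 1 n, α i ≤ ∑' j : ℕ, α (j + 1) := by
  rw [Icc_sum_eq_range]
  exact Summable.sum_le_tsum _ (fun j _ => hnn (j + 1) (by omega)) hsum

lemma exchange (f : ℕ → ℕ → ℝ) (n : ℕ) :
    ∑ k ∈ Finset.Icc 1 n, ∑ i ∈ Finset.Ioo 0 k, f i (k - i)
      = ∑ i ∈ Finset.Icc 1 n, ∑ k ∈ Finset.Ioc i n, f i (k - i) := by
  apply Finset.sum_comm'
  intro k i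
  simp only [Finset.mem_Icc, Finset.mem_Ioo, Finset.mem_Ioc]
  omega

lemma shift_sum (g : ℕ → ℝ) (i n : ℕ) :
    ∑ k ∈ Finset.Ioc i n, g (k - i) = ∑ j ∈ Finset.Icc 1 (n - i), g j := by
  apply Finset.sum_nbij' (fun k => k - i) (fun j => j + i)
  · intro a ha; simp only [Finset.mem_Ioc, Finset.mem_Icc] at *; omega
  · intro a ha; simp only [Finset.mem_Ioc, Finset.mem_Icc] at *; omega
  · intro a ha; simp only [Finset.mem_Ioc] at ha; omega
  · intro a ha; simp only [Finset.mem_Icc] at ha; omega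
  · intro a ha; simp only [Finset.mem_Ioc] at ha
    congr 1

lemma renewal_partial_le (α : ℕ → ℝ) (hnn : ∀ j : ℕ, 1 ≤ j → 0 ≤ α j)
    (hsum : Summable (fun j : ℕ => α (j + 1)))
    (hA : (∑' j : ℕ, α (j + 1)) < 1) (n : ℕ) :
    ∑ k ∈ Finset.Icc 1 n, renewalSeq α k
      ≤ (∑' j : ℕ, α (j + 1)) / (1 - (∑' j : ℕ, α (j + 1))) := by
  set A := ∑' j : ℕ, α (j + 1) with hAdef
  set S := ∑ k ∈ Finset.Icc 1 n, renewalSeq α k with hSdef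
  have hS0 : 0 ≤ S :=
    Finset.sum_nonneg fun k hk =>
      renewalSeq_nonneg α hnn k (Finset.mem_Icc.mp hk).1
  have key : S ≤ A + A * S := by
    have h1 : S = (∑ k ∈ Finset.Icc 1 n, α k)
        + ∑ k ∈ Finset.Icc 1 n, ∑ i ∈ Finset.Ioo 0 k, α i * renewalSeq α (k - i) := by
      rw [hSdef, ← Finset.sum_add_distrib]
      exact Finset.sum_congr rfl fun k _ => renewalSeq_eq α k
    have h2 : ∑ k ∈ Finset.Icc 1 n, ∑ i ∈ Finset.Ioo 0 k, α i * renewalSeq α (k - i)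
        ≤ A * S := by
      rw [exchange (fun i j => α i * renewalSeq α j) n]
      have h3 : ∀ i ∈ Finset.Icc 1 n,
          ∑ k ∈ Finset.Ioc i n, α i * renewalSeq α (k - i) ≤ α i * S := by
        intro i hi
        simp only [Finset.mem_Icc] at hi
        rw [← Finset.mul_sum]
        apply mul_le_mul_of_nonneg_left _ (hnn i hi.1)
        rw [shift_sum (renewalSeq α) i n]
        apply Finset.sum_le_sum_of_subset_of_nonneg
        · apply Finset.Icc_subset_Icc_right; omega
        · intro k hk _
          exact renewalSeq_nonneg α hnn k (Finset.mem_Icc.mp hk).1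
      calc ∑ i ∈ Finset.Icc 1 n, ∑ k ∈ Finset.Ioc i n, α i * renewalSeq α (k - i)
          ≤ ∑ i ∈ Finset.Icc 1 n, α i * S := Finset.sum_le_sum h3
        _ ≤ A * S := by
            rw [← Finset.sum_mul]
            exact mul_le_mul_of_nonneg_right (alpha_partial_le α hnn hsum n) hS0
    have h4 : ∑ k ∈ Finset.Icc 1 n, α k ≤ A := alpha_partial_le α hnn hsum n
    linarith
  rw [le_div_iff₀ (by linarith)]
  nlinarith

lemma key_rpow (γ : ℝ) (hγ : 0 < γ) (x y w : ℝ) (hx : 0 < x) (hy : 0 < y)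
    (hw : 0 ≤ w) (h : y ≤ w * x) : x ^ (-γ) ≤ w ^ γ * y ^ (-γ) := by
  have hxg : 0 < x ^ γ := Real.rpow_pos_of_pos hx γ
  have hyg : 0 < y ^ γ := Real.rpow_pos_of_pos hy γ
  have h2 : y ^ γ ≤ (w * x) ^ γ := Real.rpow_le_rpow hy.le h hγ.le
  rw [Real.mul_rpow hw hx.le] at h2
  rw [Real.rpow_neg hx.le, Real.rpow_neg hy.le, inv_eq_one_div, inv_eq_one_div,
    mul_one_div, div_le_div_iff₀ hxg hyg, one_mul]
  linarith

lemma reflect_sum (g : ℕ → ℝ) (a k : ℕ) (ha : a < k) :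
    ∑ i ∈ Finset.Ioc a (k - 1), g (k - i) = ∑ j ∈ Finset.Icc 1 (k - 1 - a), g j := by
  apply Finset.sum_nbij' (fun i => k - i) (fun j => k - j)
  · intro x hx; simp only [Finset.mem_Ioc, Finset.mem_Icc] at *; omega
  · intro x hx; simp only [Finset.mem_Ioc, Finset.mem_Icc] at *; omega
  · intro x hx; simp only [Finset.mem_Ioc] at hx; omega
  · intro x hx; simp only [Finset.mem_Icc] at hx; omega
  · intro x hx; rfl

lemma Ioc_zero_eq_Icc (n : ℕ) : Finset.Ioc 0 n = Finset.Icc 1 n := by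
  ext x; simp only [Finset.mem_Ioc, Finset.mem_Icc]; omega

set_option maxHeartbeats 1000000 in
/-- **Lemma 12**: if `(α_j)_{j≥1}` are nonnegative with `A = ∑_{j≥1} α_j < 1` and
`α_j ≤ c j^{-γ}` (`γ > 1`), then the renewal sequence satisfies `A_k ≤ C k^{-γ}`. -/
theorem renewalSeq_decay
    (α : ℕ → ℝ) (hnn : ∀ j : ℕ, 1 ≤ j → 0 ≤ α j)
    (hsum : Summable (fun j : ℕ => α (j + 1)))
    (hA : (∑' j : ℕ, α (j + 1)) < 1)
    (c γ : ℝ) (hc : 0 < c) (hγ : 1 < γ)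
    (hdecay : ∀ j : ℕ, 1 ≤ j → α j ≤ c * (j : ℝ) ^ (-γ)) :
    ∃ C : ℝ, 0 < C ∧ ∀ k : ℕ, 1 ≤ k → renewalSeq α k ≤ C * (k : ℝ) ^ (-γ) := by
  set A := ∑' j : ℕ, α (j + 1) with hAdef
  have hγ0 : (0:ℝ) < γ := by linarith
  have hA0 : 0 ≤ A := tsum_nonneg fun j => hnn (j + 1) (by omega)
  set B := A / (1 - A) with hBdef
  have hB0 : 0 ≤ B := div_nonneg hA0 (by linarith)
  have hBnd : ∀ n : ℕ, ∑ k ∈ Finset.Icc 1 n, renewalSeq α k ≤ B :=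
    renewal_partial_le α hnn hsum hA
  have hAk_le_B : ∀ k : ℕ, 1 ≤ k → renewalSeq α k ≤ B := by
    intro k hk
    calc renewalSeq α k ≤ ∑ j ∈ Finset.Icc 1 k, renewalSeq α j := by
          apply Finset.single_le_sum (f := fun j => renewalSeq α j)
          · intro j hj; exact renewalSeq_nonneg α hnn j (Finset.mem_Icc.mp hj).1
          · simp only [Finset.mem_Icc]; omega
      _ ≤ B := hBnd k
  have h2γ : (0:ℝ) < (2:ℝ) ^ γ := Real.rpow_pos_of_pos (by norm_num) γ
  -- ε and m
  set ε := (1 - A) / (4 * (2:ℝ) ^ γ) with hεdef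
  have hε : 0 < ε := by apply div_pos (by linarith) (by positivity)
  obtain ⟨m, hm⟩ : ∃ m : ℕ, A - (∑ i ∈ Finset.Icc 1 m, α i) ≤ ε := by
    have ht := hsum.hasSum.tendsto_sum_nat
    have h2 := ht.eventually (eventually_gt_nhds (show A - ε < A by linarith))
    obtain ⟨m, hm⟩ := h2.exists
    exact ⟨m, by rw [Icc_sum_eq_range]; linarith⟩
  -- δ and u
  set δ := (1 - A) / 4 with hδdef
  have hδ : 0 < δ := by simp only [hδdef]; linarith
  set u := (1 + δ) ^ (1 / γ) with hudef
  have hu1 : 1 < u := by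
    rw [hudef]
    exact (Real.one_lt_rpow_iff_of_pos (by linarith)).mpr (Or.inl ⟨by linarith, by positivity⟩)
  have huγ : u ^ γ = 1 + δ := by
    rw [hudef, ← Real.rpow_mul (by linarith), one_div_mul_cancel (by linarith), Real.rpow_one]
  -- K
  obtain ⟨K, hK2m, hKu⟩ : ∃ K : ℕ, 2 * m + 2 ≤ K ∧
      ∀ k : ℕ, K ≤ k → (k : ℝ) ≤ u * ((k : ℝ) - m) := by
    refine ⟨max (2 * m + 2) (⌈u * m / (u - 1)⌉₊ + 1), le_max_left _ _, fun k hk => ?_⟩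
    have h1 : (⌈u * m / (u - 1)⌉₊ : ℝ) ≤ k := by
      have := le_max_right (2 * m + 2) (⌈u * m / (u - 1)⌉₊ + 1)
      exact_mod_cast Nat.cast_le.mpr (le_trans (le_trans (Nat.le_succ _) this) hk)
    have h2 : u * m / (u - 1) ≤ k := le_trans (Nat.le_ceil _) h1
    have h3 : u * m ≤ (u - 1) * k := by rw [div_le_iff₀ (by linarith)] at h2; linarith
    nlinarith
  have hKpos : 1 ≤ K := by omega
  -- the constant C
  set C := max (B * (K : ℝ) ^ γ + 1) ((c + c * (2:ℝ) ^ γ * B) * 2 / (1 - A) + 1) with hCdef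
  have hC1 : B * (K : ℝ) ^ γ ≤ C := le_trans (by linarith) (le_max_left _ _)
  have hC2 : (c + c * (2:ℝ) ^ γ * B) * 2 / (1 - A) ≤ C :=
    le_trans (by linarith) (le_max_right _ _)
  have hCpos : 0 < C := by
    have hKγ : 0 ≤ B * (K : ℝ) ^ γ := by positivity
    calc (0:ℝ) < B * (K:ℝ)^γ + 1 := by linarith
      _ ≤ C := le_max_left _ _
  refine ⟨C, hCpos, ?_⟩
  intro k
  induction k using Nat.strong_induction_on with
  | _ k ih =>
    intro hk
    have hkR : (0:ℝ) < k := by exact_mod_cast hk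
    have hkγ : 0 < (k:ℝ) ^ (-γ) := Real.rpow_pos_of_pos hkR _
    by_cases hkK : k < K
    · -- base case: k < K
      have h1 : renewalSeq α k ≤ B := hAk_le_B k hk
      have h2 : B ≤ C * (k:ℝ) ^ (-γ) := by
        have hkK' : (k:ℝ) ^ γ ≤ (K:ℝ) ^ γ :=
          Real.rpow_le_rpow (by positivity) (by exact_mod_cast hkK.le) hγ0.le
        have hmul : (k:ℝ) ^ γ * (k:ℝ) ^ (-γ) = 1 := by
          rw [← Real.rpow_add hkR]; simp
        calc B = B * ((k:ℝ) ^ γ * (k:ℝ) ^ (-γ)) := by rw [hmul, mul_one]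
          _ = (B * (k:ℝ) ^ γ) * (k:ℝ) ^ (-γ) := by ring
          _ ≤ C * (k:ℝ) ^ (-γ) :=
              mul_le_mul_of_nonneg_right
                (le_trans (mul_le_mul_of_nonneg_left hkK' hB0) hC1) hkγ.le
      linarith
    · -- inductive case: k ≥ K
      push_neg at hkK
      set x := (k:ℝ) ^ (-γ) with hxdef
      set h := k / 2 with hhdef
      have hm_le_h : m ≤ h := by omega
      have hh_le : h ≤ k - 1 := by omega
      have hsplit : ∑ i ∈ Finset.Ioo 0 k, α i * renewalSeq α (k - i)
          = ((∑ i ∈ Finset.Ioc 0 m, α i * renewalSeq α (k - i))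
            + ∑ i ∈ Finset.Ioc m h, α i * renewalSeq α (k - i))
            + ∑ i ∈ Finset.Ioc h (k - 1), α i * renewalSeq α (k - i) := by
        have e1 : Finset.Ioo 0 k = Finset.Ioc 0 (k - 1) := by
          ext y; simp only [Finset.mem_Ioo, Finset.mem_Ioc]; omega
        rw [e1, ← Finset.sum_Ioc_consecutive _ (Nat.zero_le h) hh_le,
          ← Finset.sum_Ioc_consecutive _ (Nat.zero_le m) hm_le_h]
      -- T1 bound
      have hT1 : ∑ i ∈ Finset.Ioc 0 m, α i * renewalSeq α (k - i)
          ≤ A * (C * ((1 + δ) * x)) := by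
        have step : ∀ i ∈ Finset.Ioc 0 m,
            α i * renewalSeq α (k - i) ≤ α i * (C * ((1 + δ) * x)) := by
          intro i hi
          simp only [Finset.mem_Ioc] at hi
          have hik : i < k := by omega
          have hcast : ((k - i : ℕ) : ℝ) = (k:ℝ) - i := by
            push_cast [Nat.cast_sub hik.le]; ring
          have hiR : (i:ℝ) ≤ m := by exact_mod_cast hi.2
          have hrp : ((k - i : ℕ) : ℝ) ^ (-γ) ≤ (1 + δ) * x := by
            rw [hcast, ← huγ, hxdef]
            apply key_rpow γ hγ0 _ _ u (by
              have : (i:ℝ) < k := by exact_mod_cast hik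
              linarith) hkR (by linarith)
            have h1 := hKu k hkK
            have h2 : u * ((k:ℝ) - m) ≤ u * ((k:ℝ) - i) :=
              mul_le_mul_of_nonneg_left (by linarith) (by linarith)
            linarith
          have hIH := ih (k - i) (by omega) (by omega)
          have hα := hnn i hi.1
          calc α i * renewalSeq α (k - i)
              ≤ α i * (C * ((k - i : ℕ) : ℝ) ^ (-γ)) :=
                mul_le_mul_of_nonneg_left hIH hα
            _ ≤ α i * (C * ((1 + δ) * x)) :=
                mul_le_mul_of_nonneg_left
                  (mul_le_mul_of_nonneg_left hrp hCpos.le) hα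
        calc ∑ i ∈ Finset.Ioc 0 m, α i * renewalSeq α (k - i)
            ≤ ∑ i ∈ Finset.Ioc 0 m, α i * (C * ((1 + δ) * x)) :=
              Finset.sum_le_sum step
          _ = (∑ i ∈ Finset.Ioc 0 m, α i) * (C * ((1 + δ) * x)) :=
              (Finset.sum_mul _ _ _).symm
          _ ≤ A * (C * ((1 + δ) * x)) := by
              apply mul_le_mul_of_nonneg_right _ (by positivity)
              rw [Ioc_zero_eq_Icc]
              exact alpha_partial_le α hnn hsum m
      -- T2 bound
      have hαmh : ∑ i ∈ Finset.Ioc m h, α i ≤ ε := by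
        have h1 := Finset.sum_Ioc_consecutive α (Nat.zero_le m) hm_le_h
        have h2 : ∑ i ∈ Finset.Ioc 0 h, α i ≤ A := by
          rw [Ioc_zero_eq_Icc]; exact alpha_partial_le α hnn hsum h
        have h3 : ∑ i ∈ Finset.Ioc 0 m, α i = ∑ i ∈ Finset.Icc 1 m, α i := by
          rw [Ioc_zero_eq_Icc]
        linarith
      have hT2 : ∑ i ∈ Finset.Ioc m h, α i * renewalSeq α (k - i)
          ≤ ε * (C * ((2:ℝ) ^ γ * x)) := by
        have step : ∀ i ∈ Finset.Ioc m h,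
            α i * renewalSeq α (k - i) ≤ α i * (C * ((2:ℝ) ^ γ * x)) := by
          intro i hi
          simp only [Finset.mem_Ioc] at hi
          have hik : i < k := by omega
          have h2i : 2 * i ≤ k := by omega
          have hcast : ((k - i : ℕ) : ℝ) = (k:ℝ) - i := by
            push_cast [Nat.cast_sub hik.le]; ring
          have h2iR : 2 * (i:ℝ) ≤ k := by exact_mod_cast h2i
          have hikR : (i:ℝ) < k := by exact_mod_cast hik
          have hrp : ((k - i : ℕ) : ℝ) ^ (-γ) ≤ (2:ℝ) ^ γ * x := by
            rw [hcast, hxdef]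
            exact key_rpow γ hγ0 _ _ 2 (by linarith) hkR (by norm_num) (by linarith)
          have hIH := ih (k - i) (by omega) (by omega)
          have hα := hnn i (by omega)
          calc α i * renewalSeq α (k - i)
              ≤ α i * (C * ((k - i : ℕ) : ℝ) ^ (-γ)) :=
                mul_le_mul_of_nonneg_left hIH hα
            _ ≤ α i * (C * ((2:ℝ) ^ γ * x)) :=
                mul_le_mul_of_nonneg_left
                  (mul_le_mul_of_nonneg_left hrp hCpos.le) hα
        calc ∑ i ∈ Finset.Ioc m h, α i * renewalSeq α (k - i)
            ≤ ∑ i ∈ Finset.Ioc m h, α i * (C * ((2:ℝ) ^ γ * x)) :=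
              Finset.sum_le_sum step
          _ = (∑ i ∈ Finset.Ioc m h, α i) * (C * ((2:ℝ) ^ γ * x)) :=
              (Finset.sum_mul _ _ _).symm
          _ ≤ ε * (C * ((2:ℝ) ^ γ * x)) :=
              mul_le_mul_of_nonneg_right hαmh (by positivity)
      -- T3 bound
      have hT3 : ∑ i ∈ Finset.Ioc h (k - 1), α i * renewalSeq α (k - i)
          ≤ c * ((2:ℝ) ^ γ * x) * B := by
        have step : ∀ i ∈ Finset.Ioc h (k - 1),
            α i * renewalSeq α (k - i)
              ≤ (c * ((2:ℝ) ^ γ * x)) * renewalSeq α (k - i) := by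
          intro i hi
          simp only [Finset.mem_Ioc] at hi
          have h1i : 1 ≤ i := by omega
          have h2i : k ≤ 2 * i := by omega
          have h2iR : (k:ℝ) ≤ 2 * i := by exact_mod_cast h2i
          have hiR : (0:ℝ) < i := by exact_mod_cast h1i
          have hrp : (i:ℝ) ^ (-γ) ≤ (2:ℝ) ^ γ * x := by
            rw [hxdef]
            exact key_rpow γ hγ0 _ _ 2 hiR hkR (by norm_num) (by linarith)
          have hαb : α i ≤ c * ((2:ℝ) ^ γ * x) :=
            le_trans (hdecay i h1i) (mul_le_mul_of_nonneg_left hrp hc.le)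
          exact mul_le_mul_of_nonneg_right hαb
            (renewalSeq_nonneg α hnn (k - i) (by omega))
        calc ∑ i ∈ Finset.Ioc h (k - 1), α i * renewalSeq α (k - i)
            ≤ ∑ i ∈ Finset.Ioc h (k - 1),
                (c * ((2:ℝ) ^ γ * x)) * renewalSeq α (k - i) :=
              Finset.sum_le_sum step
          _ = (c * ((2:ℝ) ^ γ * x)) *
                ∑ i ∈ Finset.Ioc h (k - 1), renewalSeq α (k - i) := by
              rw [Finset.mul_sum]
          _ ≤ c * ((2:ℝ) ^ γ * x) * B := by
              apply mul_le_mul_of_nonneg_left _ (by positivity)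
              rw [reflect_sum (renewalSeq α) h k (by omega)]
              exact hBnd (k - 1 - h)
      -- combine
      have hαk : α k ≤ c * x := hdecay k hk
      have hε2 : ε * (2:ℝ) ^ γ = (1 - A) / 4 := by
        rw [hεdef]; field_simp
      have hC2' : (c + c * (2:ℝ) ^ γ * B) * 2 ≤ C * (1 - A) := by
        rw [div_le_iff₀ (by linarith : (0:ℝ) < 1 - A)] at hC2
        linarith
      clear_value A B ε δ u C x
      have hcoef : c + A * C * (1 + δ) + ε * C * (2:ℝ) ^ γ + c * (2:ℝ) ^ γ * B ≤ C := by
        have hεC : ε * C * (2:ℝ) ^ γ = C * ((1 - A) / 4) := by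
          rw [mul_right_comm, hε2]; ring
        have hACδ : A * C * (1 + δ) ≤ A * C + C * δ := by
          have h1 : A * (C * δ) ≤ C * δ :=
            mul_le_of_le_one_left (mul_nonneg hCpos.le hδ.le) hA.le
          calc A * C * (1 + δ) = A * C + A * (C * δ) := by ring
            _ ≤ A * C + C * δ := by linarith
        rw [hεC]
        rw [hδdef] at hACδ ⊢
        nlinarith [hACδ, hC2', hCpos.le, hA0]
      rw [renewalSeq_eq, hsplit]
      calc α k + (((∑ i ∈ Finset.Ioc 0 m, α i * renewalSeq α (k - i))
              + ∑ i ∈ Finset.Ioc m h, α i * renewalSeq α (k - i))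
              + ∑ i ∈ Finset.Ioc h (k - 1), α i * renewalSeq α (k - i))
          ≤ c * x + (A * (C * ((1 + δ) * x)) + ε * (C * ((2:ℝ) ^ γ * x))
              + c * ((2:ℝ) ^ γ * x) * B) := by linarith
        _ = (c + A * C * (1 + δ) + ε * C * (2:ℝ) ^ γ + c * (2:ℝ) ^ γ * B) * x := by
            ring
        _ ≤ C * x := mul_le_mul_of_nonneg_right hcoef hkγ.le
end

section
/- Let (r_t) be a stationary solution of the asymmetric ARCH(1) equation r_t = ζ_t (c² + (a + b r_{t−1})²)^{1/2} with b² < 1, Eζ₀ = 0, Eζ₀² = 1, μ₃ := Eζ₀³ = 0, μ₄ := Eζ₀⁴ < ∞, μ₄ b⁴ < 1 and E r_t⁴ < ∞. Set m₂ := E r_0² and m₃(t) := E[r_t² r_0], m₄(t) := E[r_t² r_0²]. Then: m₂ = (a² + c²)/(1 − b²); m₃(t) = (2ab(a² + c²)/(1 − b²)) b^{2(t−1)} for all t ≥ 1; m₄(0) = μ₄((a²+c²)² + ((2ab)² + 2(a²+c²)b²) m₂)/(1 − μ₄ b⁴); m₄(t) = m₂(a²+c²)(1 − b^{2t})/(1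 − b²) + b^{2t} m₄(0) for t ≥ 1; and Cov(r_t², r_0²) = (m₄(0) − m₂²) b^{2t} for all t ≥ 0. -/
/-!
Since `ζ_{t+1}` is independent of `σ(ζ_s, s ≤ t)`, for every past-measurable `X` one has
`E[r_{t+1}^k X] = μ_k E[σ_t^k X]` with `σ_t² = c² + (a + b r_t)²`. With `μ₁ = μ₃ = 0` this kills
`E[r_{t+1} X]` and the odd moments of `r`, and with `μ₂ = 1` it turns `E[r_t² r_0^j]` (`j = 0, 1, 2`)
into arithmetic-geometric sequences in `t` with ratio `b²`. Stationarity closes the recursions: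
`m₂` and `m₄(0)` solve linear fixed-point equations, and `m₃(t)`, `m₄(t)` follow by iteration.
-/

open MeasureTheory ProbabilityTheory Filter

/-- σ-algebra `F_t = σ(ζ_s, s ≤ t)` generated by the noise up to time `t`. -/
def noiseFiltration {Ω : Type*} [MeasureSpace Ω] (ζ : ℤ → Ω → ℝ) (t : ℤ) :
    MeasurableSpace Ω :=
  ⨆ s : {s : ℤ // s ≤ t}, MeasurableSpace.comap (ζ s) inferInstance

/-- Strict stationarity of a process indexed by `ℤ`. -/
def StrictStationary {Ω : Type*} [MeasureSpace Ω] {α : Type*} [MeasurableSpace α]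
    (Y : ℤ → Ω → α) : Prop :=
  ∀ (t : ℤ) (n : ℕ) (s : Fin n → ℤ),
    IdentDistrib (fun ω i => Y (s i) ω) (fun ω i => Y (s i + t) ω)
      (ℙ : Measure Ω) (ℙ : Measure Ω)

namespace MeasureTheory.MemLp

variable {α : Type*} {_ : MeasurableSpace α} {μ : Measure α} {f g : α → ℝ}

theorem sq_of_four (hf : MemLp f 4 μ) : MemLp (fun x => f x ^ 2) 2 μ := by
  refine (memLp_two_iff_integrable_sq (hf.aestronglyMeasurable.pow 2)).2 ?_
  simpa [← pow_mul, Even.pow_abs ⟨2, rfl⟩] using hf.integrable_norm_pow (p := 4) (by norm_num)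

variable [IsFiniteMeasure μ]

theorem pow_of_four (hf : MemLp f 4 μ) {i : ℕ} (hi : i ≤ 2) :
    MemLp (fun x => f x ^ i) 2 μ := by
  interval_cases i
  · simpa using memLp_const (1 : ℝ)
  · simpa using hf.mono_exponent (by norm_num)
  · exact hf.sq_of_four

theorem integrable_pow_mul_pow (hf : MemLp f 4 μ) (hg : MemLp g 4 μ) {i j : ℕ}
    (hi : i ≤ 2) (hj : j ≤ 2) : Integrable (fun x => f x ^ i * g x ^ j) μ :=
  (hf.pow_of_four hi).integrable_mul (hg.pow_of_four hj)

theorem integrable_pow_of_four (hf : MemLp f 4 μ) {k : ℕ} (hk : k ≤ 4) :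
    Integrable (fun x => f x ^ k) μ := by
  obtain ⟨i, j, hi, hj, rfl⟩ : ∃ i j, i ≤ 2 ∧ j ≤ 2 ∧ k = i + j :=
    ⟨min k 2, k - min k 2, min_le_right _ _, by omega, by omega⟩
  simpa only [pow_add] using hf.integrable_pow_mul_pow hf hi hj

end MeasureTheory.MemLp

def asymArchVar (a b c x : ℝ) : ℝ := c ^ 2 + (a + b * x) ^ 2

theorem asymArchVar_nonneg (a b c x : ℝ) : 0 ≤ asymArchVar a b c x := by
  unfold asymArchVar
  positivity

theorem continuous_asymArchVar (a b c : ℝ) : Continuous (asymArchVar a b c) := by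
  unfold asymArchVar
  fun_prop

section Expansion

variable {α : Type*} {_ : MeasurableSpace α} {μ : Measure α} (a b c : ℝ)

theorem integral_asymArchVar_mul {x X : α → ℝ} (h0 : Integrable X μ)
    (h1 : Integrable (fun ω => x ω * X ω) μ) (h2 : Integrable (fun ω => x ω ^ 2 * X ω) μ) :
    ∫ ω, asymArchVar a b c (x ω) * X ω ∂μ =
      (a ^ 2 + c ^ 2) * ∫ ω, X ω ∂μ + 2 * a * b * ∫ ω, x ω * X ω ∂μ +
        b ^ 2 * ∫ ω, x ω ^ 2 * X ω ∂μ := by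
  calc ∫ ω, asymArchVar a b c (x ω) * X ω ∂μ
      = ∫ ω, (a ^ 2 + c ^ 2) * X ω + 2 * a * b * (x ω * X ω) + b ^ 2 * (x ω ^ 2 * X ω) ∂μ := by
        congr with ω
        rw [asymArchVar]
        ring
    _ = _ := by
      rw [integral_add (by fun_prop) (by fun_prop), integral_add (by fun_prop) (by fun_prop),
        integral_const_mul, integral_const_mul, integral_const_mul]

theorem integral_asymArchVar_sq [IsProbabilityMeasure μ] {x : α → ℝ} (hx : MemLp x 4 μ) :
    ∫ ω, asymArchVar a b c (x ω) ^ 2 ∂μ =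
      (a ^ 2 + c ^ 2) ^ 2 + 4 * a * b * (a ^ 2 + c ^ 2) * ∫ ω, x ω ∂μ +
        ((2 * a * b) ^ 2 + 2 * (a ^ 2 + c ^ 2) * b ^ 2) * ∫ ω, x ω ^ 2 ∂μ +
        4 * a * b ^ 3 * ∫ ω, x ω ^ 3 ∂μ + b ^ 4 * ∫ ω, x ω ^ 4 ∂μ := by
  have h1 : Integrable x μ := by simpa using hx.integrable_pow_of_four (k := 1) (by norm_num)
  have h2 := hx.integrable_pow_of_four (k := 2) (by norm_num)
  have h3 := hx.integrable_pow_of_four (k := 3) (by norm_num)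
  have h4 := hx.integrable_pow_of_four (k := 4) le_rfl
  calc ∫ ω, asymArchVar a b c (x ω) ^ 2 ∂μ
      = ∫ ω, (a ^ 2 + c ^ 2) ^ 2 + 4 * a * b * (a ^ 2 + c ^ 2) * x ω +
          ((2 * a * b) ^ 2 + 2 * (a ^ 2 + c ^ 2) * b ^ 2) * x ω ^ 2 +
          4 * a * b ^ 3 * x ω ^ 3 + b ^ 4 * x ω ^ 4 ∂μ := by
        congr with ω
        rw [asymArchVar]
        ring
    _ = _ := by
      rw [integral_add (by fun_prop) (by fun_prop), integral_add (by fun_prop) (by fun_prop),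
        integral_add (by fun_prop) (by fun_prop), integral_add (by fun_prop) (by fun_prop),
        integral_const_mul, integral_const_mul, integral_const_mul, integral_const_mul,
        integral_const, probReal_univ, one_smul]

end Expansion

theorem eq_arithGeom {R : Type*} [Mul R] [Add R] {a b : R} {u : ℕ → R}
    (hu : ∀ n, u (n + 1) = a * u n + b) : u = arithGeom a b (u 0) := by
  funext n
  induction n with
  | zero => rfl
  | succ n ih => rw [hu, ih, arithGeom_succ]

section ARCH

variable {Ω : Type*} [MeasureSpace Ω] {ζ : ℤ → Ω → ℝ}

theorem noiseFiltration_le (hζ : ∀ t, Measurable (ζ t)) (t : ℤ) :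
    noiseFiltration ζ t ≤ MeasureSpace.toMeasurableSpace :=
  iSup_le fun s => (hζ s).comap_le

theorem noiseFiltration_mono : Monotone (noiseFiltration ζ) := fun _ _ hst =>
  iSup_le fun u => le_iSup_of_le ⟨u.1, u.2.trans hst⟩ le_rfl

theorem indep_comap_noiseFiltration (hζ : ∀ t, Measurable (ζ t)) (hind : iIndepFun ζ ℙ)
    {s t : ℤ} (hst : s < t) :
    Indep (MeasurableSpace.comap (ζ t) inferInstance) (noiseFiltration ζ s) ℙ := by
  have hdisj : Disjoint {t} {u : ℤ | u ≤ s} := by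
    rw [Set.disjoint_singleton_left, Set.mem_ofPred_eq, not_le]
    exact hst
  refine indep_of_indep_of_le
    (indep_iSup_of_disjoint (fun i => (hζ i).comap_le) hind.iIndep hdisj) ?_ ?_
  · exact le_biSup (fun i => MeasurableSpace.comap (ζ i) inferInstance) (Set.mem_singleton t)
  · exact iSup_le fun u => le_biSup (fun i => MeasurableSpace.comap (ζ i) inferInstance) u.2

/-- No integrability is needed: when a factor is not integrable, both sides are `0`. -/
theorem integral_comp_mul_of_measurable_noiseFiltration (hζ : ∀ t, Measurable (ζ t))
    (hind : iIndepFun ζ ℙ) (hident : ∀ t, IdentDistrib (ζ t) (ζ 0) ℙ ℙ) {s t : ℤ} (hst : s < t)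
    {φ : ℝ → ℝ} (hφ : Measurable φ) {X : Ω → ℝ} (hX : Measurable[noiseFiltration ζ s] X) :
    ∫ ω, φ (ζ t ω) * X ω = (∫ ω, φ (ζ 0 ω)) * ∫ ω, X ω := by
  have hindep : IndepFun (ζ t) X ℙ := by
    rw [IndepFun_iff_Indep]
    exact indep_of_indep_of_le_right (indep_comap_noiseFiltration hζ hind hst) hX.comap_le
  have hcomp := (hindep.comp hφ measurable_id).integral_mul_eq_mul_integral
    (hφ.comp (hζ t)).aestronglyMeasurable
    (hX.mono (noiseFiltration_le hζ s) le_rfl).aestronglyMeasurable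
  have hmoment := ((hident t).comp hφ).integral_eq
  simp only [Function.comp_def, Pi.mul_apply, id] at hcomp hmoment
  rw [hcomp, hmoment]

theorem StrictStationary.identDistrib_zero {α : Type*} [MeasurableSpace α] {Y : ℤ → Ω → α}
    (hY : StrictStationary Y) (t : ℤ) : IdentDistrib (Y t) (Y 0) ℙ ℙ := by
  have h := (hY t 1 fun _ => 0).comp (measurable_pi_apply 0)
  simpa [Function.comp_def] using h.symm

theorem StrictStationary.integral_pow {Y : ℤ → Ω → ℝ} (hY : StrictStationary Y) (t : ℤ)
    (k : ℕ) : ∫ ω, Y t ω ^ k = ∫ ω, Y 0 ω ^ k :=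
  ((hY.identDistrib_zero t).comp (measurable_id.pow_const k)).integral_eq

structure IsAsymARCH1 (ζ r : ℤ → Ω → ℝ) (a b c : ℝ) : Prop where
  measurable_noise : ∀ t, Measurable (ζ t)
  iIndepFun_noise : iIndepFun ζ ℙ
  identDistrib_noise : ∀ t, IdentDistrib (ζ t) (ζ 0) ℙ ℙ
  adapted : ∀ t, Measurable[noiseFiltration ζ t] (r t)
  ae_eq : ∀ t, r t =ᵐ[ℙ] fun ω => ζ t ω * √(asymArchVar a b c (r (t - 1) ω))

namespace IsAsymARCH1

variable {r : ℤ → Ω → ℝ} {a b c : ℝ}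

theorem measurable_of_le (h : IsAsymARCH1 ζ r a b c) {s t : ℤ} (hst : s ≤ t) :
    Measurable[noiseFiltration ζ t] (r s) :=
  (h.adapted s).mono (noiseFiltration_mono hst) le_rfl

theorem integral_succ_pow_mul (h : IsAsymARCH1 ζ r a b c) (k : ℕ) {t : ℤ} {X : Ω → ℝ}
    (hX : Measurable[noiseFiltration ζ t] X) :
    ∫ ω, r (t + 1) ω ^ k * X ω =
      (∫ ω, ζ 0 ω ^ k) * ∫ ω, √(asymArchVar a b c (r t ω)) ^ k * X ω := by
  have hae : (fun ω => r (t + 1) ω ^ k * X ω) =ᵐ[ℙ]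
      fun ω => ζ (t + 1) ω ^ k * (√(asymArchVar a b c (r t ω)) ^ k * X ω) := by
    filter_upwards [h.ae_eq (t + 1)] with ω hω
    rw [hω, add_sub_cancel_right]
    ring
  have hvol : Measurable[noiseFiltration ζ t] fun ω => √(asymArchVar a b c (r t ω)) :=
    (Real.continuous_sqrt.comp (continuous_asymArchVar a b c)).measurable.comp (h.adapted t)
  rw [integral_congr_ae hae]
  exact integral_comp_mul_of_measurable_noiseFiltration h.measurable_noise h.iIndepFun_noise
    h.identDistrib_noise (lt_add_one t) (measurable_id.pow_const k) ((hvol.pow_const k).mul hX)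

theorem integral_succ_mul_eq_zero (h : IsAsymARCH1 ζ r a b c) (hmean : ∫ ω, ζ 0 ω = 0) {t : ℤ}
    {X : Ω → ℝ} (hX : Measurable[noiseFiltration ζ t] X) : ∫ ω, r (t + 1) ω * X ω = 0 := by
  simpa [hmean] using h.integral_succ_pow_mul 1 hX

theorem integral_succ_sq_mul (h : IsAsymARCH1 ζ r a b c) (hvar : ∫ ω, ζ 0 ω ^ 2 = 1) {t : ℤ}
    {X : Ω → ℝ} (hX : Measurable[noiseFiltration ζ t] X) :
    ∫ ω, r (t + 1) ω ^ 2 * X ω = ∫ ω, asymArchVar a b c (r t ω) * X ω := by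
  simpa [hvar, Real.sq_sqrt (asymArchVar_nonneg ..)] using h.integral_succ_pow_mul 2 hX

theorem integral_succ_pow_three (h : IsAsymARCH1 ζ r a b c) (hskew : ∫ ω, ζ 0 ω ^ 3 = 0) (t : ℤ) :
    ∫ ω, r (t + 1) ω ^ 3 = 0 := by
  simpa [hskew] using h.integral_succ_pow_mul 3 (X := fun _ => 1) measurable_const

theorem integral_succ_pow_four (h : IsAsymARCH1 ζ r a b c) (t : ℤ) :
    ∫ ω, r (t + 1) ω ^ 4 = (∫ ω, ζ 0 ω ^ 4) * ∫ ω, asymArchVar a b c (r t ω) ^ 2 := by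
  have h4 : ∀ x : ℝ, √(asymArchVar a b c x) ^ 4 = asymArchVar a b c x ^ 2 := fun x => by
    rw [show 4 = 2 * 2 from rfl, pow_mul, Real.sq_sqrt (asymArchVar_nonneg ..)]
  simpa [h4] using h.integral_succ_pow_mul 4 (X := fun _ => 1) measurable_const

theorem integral_eq_zero (h : IsAsymARCH1 ζ r a b c) (hmean : ∫ ω, ζ 0 ω = 0)
    (hr : StrictStationary r) : ∫ ω, r 0 ω = 0 := by
  have hstat := hr.integral_pow 1 1
  simp only [pow_one] at hstat
  simpa [← hstat] using
    h.integral_succ_mul_eq_zero hmean (t := 0) (X := fun _ => 1) measurable_const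

theorem integral_pow_three_eq_zero (h : IsAsymARCH1 ζ r a b c) (hskew : ∫ ω, ζ 0 ω ^ 3 = 0)
    (hr : StrictStationary r) : ∫ ω, r 0 ω ^ 3 = 0 := by
  simpa [hr.integral_pow 1 3] using h.integral_succ_pow_three hskew 0

variable [IsProbabilityMeasure (ℙ : Measure Ω)]

theorem integral_succ_sq_mul_pow (h : IsAsymARCH1 ζ r a b c) (hvar : ∫ ω, ζ 0 ω ^ 2 = 1)
    (hr4 : ∀ t, MemLp (r t) 4 ℙ) (n : ℕ) {j : ℕ} (hj : j ≤ 2) :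
    ∫ ω, r (n + 1) ω ^ 2 * r 0 ω ^ j =
      (a ^ 2 + c ^ 2) * (∫ ω, r 0 ω ^ j) + 2 * a * b * (∫ ω, r n ω * r 0 ω ^ j) +
        b ^ 2 * ∫ ω, r n ω ^ 2 * r 0 ω ^ j := by
  rw [h.integral_succ_sq_mul hvar ((h.measurable_of_le n.cast_nonneg).pow_const j)]
  refine integral_asymArchVar_mul a b c (x := r n) (X := fun ω => r 0 ω ^ j) ?_ ?_ ?_
  · simpa using (hr4 n).integrable_pow_mul_pow (hr4 0) (i := 0) (by norm_num) hj
  · simpa using (hr4 n).integrable_pow_mul_pow (hr4 0) (i := 1) (by norm_num) hj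
  · exact (hr4 n).integrable_pow_mul_pow (hr4 0) le_rfl hj

theorem integral_sq_eq (h : IsAsymARCH1 ζ r a b c) (hmean : ∫ ω, ζ 0 ω = 0)
    (hvar : ∫ ω, ζ 0 ω ^ 2 = 1) (hr : StrictStationary r) (hr4 : ∀ t, MemLp (r t) 4 ℙ)
    (hb : b ^ 2 ≠ 1) : ∫ ω, r 0 ω ^ 2 = (a ^ 2 + c ^ 2) / (1 - b ^ 2) := by
  have hrec := h.integral_succ_sq_mul_pow hvar hr4 0 (j := 0) (by norm_num)
  simp only [pow_zero, mul_one, Nat.cast_zero, zero_add, hr.integral_pow 1 2,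
    h.integral_eq_zero hmean hr, integral_const, probReal_univ, one_smul] at hrec
  rw [eq_div_iff (sub_ne_zero.2 hb.symm)]
  linear_combination hrec

theorem integral_succ_sq_mul_eq (h : IsAsymARCH1 ζ r a b c) (hmean : ∫ ω, ζ 0 ω = 0)
    (hvar : ∫ ω, ζ 0 ω ^ 2 = 1) (hskew : ∫ ω, ζ 0 ω ^ 3 = 0) (hr : StrictStationary r)
    (hr4 : ∀ t, MemLp (r t) 4 ℙ) (n : ℕ) :
    ∫ ω, r (n + 1) ω ^ 2 * r 0 ω = 2 * a * b * (∫ ω, r 0 ω ^ 2) * (b ^ 2) ^ n := by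
  induction n with
  | zero =>
    have hrec := h.integral_succ_sq_mul_pow hvar hr4 0 (j := 1) (by norm_num)
    simp only [pow_one, Nat.cast_zero, ← sq, ← pow_succ, h.integral_eq_zero hmean hr,
      h.integral_pow_three_eq_zero hskew hr] at hrec
    rw [Nat.cast_zero, hrec]
    ring
  | succ n ih =>
    have hrec := h.integral_succ_sq_mul_pow hvar hr4 (n + 1) (j := 1) (by norm_num)
    simp only [pow_one, Nat.cast_succ, h.integral_eq_zero hmean hr,
      h.integral_succ_mul_eq_zero hmean (h.measurable_of_le n.cast_nonneg), ih] at hrec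
    rw [Nat.cast_succ, hrec]
    ring

theorem integral_pow_four_eq (h : IsAsymARCH1 ζ r a b c) (hmean : ∫ ω, ζ 0 ω = 0)
    (hskew : ∫ ω, ζ 0 ω ^ 3 = 0) (hr : StrictStationary r) (hr4 : ∀ t, MemLp (r t) 4 ℙ)
    (hμ₄b : (∫ ω, ζ 0 ω ^ 4) * b ^ 4 ≠ 1) :
    ∫ ω, r 0 ω ^ 4 = (∫ ω, ζ 0 ω ^ 4) * ((a ^ 2 + c ^ 2) ^ 2 +
      ((2 * a * b) ^ 2 + 2 * (a ^ 2 + c ^ 2) * b ^ 2) * ∫ ω, r 0 ω ^ 2) /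
        (1 - (∫ ω, ζ 0 ω ^ 4) * b ^ 4) := by
  have hm₄ := h.integral_succ_pow_four 0
  rw [zero_add, hr.integral_pow 1 4, integral_asymArchVar_sq a b c (hr4 0),
    h.integral_eq_zero hmean hr, h.integral_pow_three_eq_zero hskew hr] at hm₄
  rw [eq_div_iff (sub_ne_zero.2 hμ₄b.symm)]
  linear_combination hm₄

theorem integral_sq_mul_sq (h : IsAsymARCH1 ζ r a b c) (hmean : ∫ ω, ζ 0 ω = 0)
    (hvar : ∫ ω, ζ 0 ω ^ 2 = 1) (hskew : ∫ ω, ζ 0 ω ^ 3 = 0) (hr : StrictStationary r)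
    (hr4 : ∀ t, MemLp (r t) 4 ℙ) (hb : b ^ 2 ≠ 1) (n : ℕ) :
    ∫ ω, r n ω ^ 2 * r 0 ω ^ 2 =
      (b ^ 2) ^ n * ((∫ ω, r 0 ω ^ 4) - (∫ ω, r 0 ω ^ 2) ^ 2) + (∫ ω, r 0 ω ^ 2) ^ 2 := by
  set m₂ := ∫ ω, r 0 ω ^ 2
  have hrec : ∀ n : ℕ, ∫ ω, r (n + 1 : ℕ) ω ^ 2 * r 0 ω ^ 2 =
      b ^ 2 * (∫ ω, r n ω ^ 2 * r 0 ω ^ 2) + (a ^ 2 + c ^ 2) * m₂ := by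
    intro n
    have hodd : ∫ ω, r n ω * r 0 ω ^ 2 = 0 := by
      cases n with
      | zero => simpa [← pow_succ'] using h.integral_pow_three_eq_zero hskew hr
      | succ n =>
        rw [Nat.cast_succ]
        exact h.integral_succ_mul_eq_zero hmean
          ((h.measurable_of_le n.cast_nonneg).pow_const 2)
    rw [Nat.cast_succ, h.integral_succ_sq_mul_pow hvar hr4 n le_rfl, hodd]
    ring
  have hm₂ : (a ^ 2 + c ^ 2) * m₂ / (1 - b ^ 2) = m₂ ^ 2 := by
    rw [mul_div_right_comm, ← h.integral_sq_eq hmean hvar hr hr4 hb, sq]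
  rw [congrFun (eq_arithGeom (u := fun n : ℕ => ∫ ω, r n ω ^ 2 * r 0 ω ^ 2) hrec) n,
    arithGeom_eq hb, hm₂, Nat.cast_zero]
  simp only [← pow_add]

end IsAsymARCH1

end ARCH

theorem arch1_moments_general
    {Ω : Type*} [MeasureSpace Ω] [IsProbabilityMeasure (ℙ : Measure Ω)]
    (ζ : ℤ → Ω → ℝ) (hζmeas : ∀ t, Measurable (ζ t))
    (hindep : iIndepFun ζ (ℙ : Measure Ω))
    (hident : ∀ t, IdentDistrib (ζ t) (ζ 0) (ℙ : Measure Ω) (ℙ : Measure Ω))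
    (hmean : ∫ ω, ζ 0 ω ∂(ℙ : Measure Ω) = 0)
    (hvar : ∫ ω, (ζ 0 ω) ^ 2 ∂(ℙ : Measure Ω) = 1)
    (hskew : ∫ ω, (ζ 0 ω) ^ 3 ∂(ℙ : Measure Ω) = 0)
    (a b c : ℝ) (hb : b ^ 2 < 1)
    (hμ4b : (∫ ω, (ζ 0 ω) ^ 4 ∂(ℙ : Measure Ω)) * b ^ 4 < 1)
    (r : ℤ → Ω → ℝ)
    (hadapted : ∀ t : ℤ, Measurable[noiseFiltration ζ t] (r t))
    (hrstat : StrictStationary r)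
    (hr4 : ∀ t : ℤ, MemLp (r t) 4 (ℙ : Measure Ω))
    (heq : ∀ t : ℤ, r t =ᵐ[(ℙ : Measure Ω)]
      fun ω => ζ t ω * Real.sqrt (c ^ 2 + (a + b * r (t - 1) ω) ^ 2)) :
    (∫ ω, (r 0 ω) ^ 2 ∂(ℙ : Measure Ω)) = (a ^ 2 + c ^ 2) / (1 - b ^ 2) ∧
    (∀ t : ℕ, 1 ≤ t →
      ∫ ω, (r (t : ℤ) ω) ^ 2 * r 0 ω ∂(ℙ : Measure Ω) =
        (2 * a * b * (a ^ 2 + c ^ 2) / (1 - b ^ 2)) * b ^ (2 * (t - 1))) ∧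
    (∫ ω, (r 0 ω) ^ 4 ∂(ℙ : Measure Ω) =
      (∫ ω, (ζ 0 ω) ^ 4 ∂(ℙ : Measure Ω)) *
        ((a ^ 2 + c ^ 2) ^ 2 +
          ((2 * a * b) ^ 2 + 2 * (a ^ 2 + c ^ 2) * b ^ 2) *
            ∫ ω, (r 0 ω) ^ 2 ∂(ℙ : Measure Ω)) /
        (1 - (∫ ω, (ζ 0 ω) ^ 4 ∂(ℙ : Measure Ω)) * b ^ 4)) ∧
    (∀ t : ℕ, 1 ≤ t →
      ∫ ω, (r (t : ℤ) ω) ^ 2 * (r 0 ω) ^ 2 ∂(ℙ : Measure Ω) =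
        (∫ ω, (r 0 ω) ^ 2 ∂(ℙ : Measure Ω)) * (a ^ 2 + c ^ 2) * (1 - b ^ (2 * t)) /
            (1 - b ^ 2) +
          b ^ (2 * t) * ∫ ω, (r 0 ω) ^ 4 ∂(ℙ : Measure Ω)) ∧
    (∀ t : ℕ,
      (∫ ω, (r (t : ℤ) ω) ^ 2 * (r 0 ω) ^ 2 ∂(ℙ : Measure Ω)) -
          (∫ ω, (r (t : ℤ) ω) ^ 2 ∂(ℙ : Measure Ω)) * ∫ ω, (r 0 ω) ^ 2 ∂(ℙ : Measure Ω) =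
        ((∫ ω, (r 0 ω) ^ 4 ∂(ℙ : Measure Ω)) -
            (∫ ω, (r 0 ω) ^ 2 ∂(ℙ : Measure Ω)) ^ 2) * b ^ (2 * t)) := by
  have h : IsAsymARCH1 ζ r a b c := ⟨hζmeas, hindep, hident, hadapted, heq⟩
  have hb₁ : 1 - b ^ 2 ≠ 0 := sub_ne_zero.2 hb.ne'
  have hm₂ := h.integral_sq_eq hmean hvar hrstat hr4 hb.ne
  have hm₄ := h.integral_sq_mul_sq hmean hvar hskew hrstat hr4 hb.ne
  refine ⟨hm₂, fun t ht => ?_, h.integral_pow_four_eq hmean hskew hrstat hr4 hμ4b.ne,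
    fun t _ => ?_, fun t => ?_⟩
  · obtain ⟨n, rfl⟩ := Nat.exists_eq_add_of_le' ht
    rw [Nat.cast_succ, h.integral_succ_sq_mul_eq hmean hvar hskew hrstat hr4, hm₂,
      Nat.add_sub_cancel, pow_mul]
    ring
  · rw [hm₄ t, pow_mul, hm₂]
    field_simp
    ring
  · rw [hm₄ t, hrstat.integral_pow t 2, pow_mul]
    ring

/-- **Example 2 (moments of the asymmetric ARCH(1))**: for a stationary solution of
`r_t = ζ_t (c² + (a + b r_{t-1})²)^{1/2}` with `b² < 1`, `μ₃ = 0`, `μ₄ b⁴ < 1` and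
`E r_t⁴ < ∞`, one has `m₂ = (a²+c²)/(1−b²)`,
`m₃(t) = E[r_t² r_0] = (2ab(a²+c²)/(1−b²)) b^{2(t−1)}` for `t ≥ 1`,
`m₄(0) = μ₄((a²+c²)² + ((2ab)² + 2(a²+c²)b²)m₂)/(1 − μ₄b⁴)`,
`m₄(t) = m₂(a²+c²)(1−b^{2t})/(1−b²) + b^{2t} m₄(0)` for `t ≥ 1`, and
`Cov(r_t², r_0²) = (m₄(0) − m₂²) b^{2t}` for `t ≥ 0`. -/
theorem arch1_moments
    {Ω : Type*} [MeasureSpace Ω] [IsProbabilityMeasure (ℙ : Measure Ω)]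
    (ζ : ℤ → Ω → ℝ) (hζmeas : ∀ t, Measurable (ζ t))
    (hindep : iIndepFun ζ (ℙ : Measure Ω))
    (hident : ∀ t, IdentDistrib (ζ t) (ζ 0) (ℙ : Measure Ω) (ℙ : Measure Ω))
    (hμ4 : MemLp (ζ 0) 4 (ℙ : Measure Ω))
    (hmean : ∫ ω, ζ 0 ω ∂(ℙ : Measure Ω) = 0)
    (hvar : ∫ ω, (ζ 0 ω) ^ 2 ∂(ℙ : Measure Ω) = 1)
    (hskew : ∫ ω, (ζ 0 ω) ^ 3 ∂(ℙ : Measure Ω) = 0)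
    (a b c : ℝ) (hb : b ^ 2 < 1)
    (hμ4b : (∫ ω, (ζ 0 ω) ^ 4 ∂(ℙ : Measure Ω)) * b ^ 4 < 1)
    (r : ℤ → Ω → ℝ)
    (hadapted : ∀ t : ℤ, Measurable[noiseFiltration ζ t] (r t))
    (hrstat : StrictStationary r)
    (hr4 : ∀ t : ℤ, MemLp (r t) 4 (ℙ : Measure Ω))
    (heq : ∀ t : ℤ, r t =ᵐ[(ℙ : Measure Ω)]
      fun ω => ζ t ω * Real.sqrt (c ^ 2 + (a + b * r (t - 1) ω) ^ 2)) :
    (∫ ω, (r 0 ω) ^ 2 ∂(ℙ : Measure Ω)) = (a ^ 2 + c ^ 2) / (1 - b ^ 2) ∧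
    (∀ t : ℕ, 1 ≤ t →
      ∫ ω, (r (t : ℤ) ω) ^ 2 * r 0 ω ∂(ℙ : Measure Ω) =
        (2 * a * b * (a ^ 2 + c ^ 2) / (1 - b ^ 2)) * b ^ (2 * (t - 1))) ∧
    (∫ ω, (r 0 ω) ^ 4 ∂(ℙ : Measure Ω) =
      (∫ ω, (ζ 0 ω) ^ 4 ∂(ℙ : Measure Ω)) *
        ((a ^ 2 + c ^ 2) ^ 2 +
          ((2 * a * b) ^ 2 + 2 * (a ^ 2 + c ^ 2) * b ^ 2) *
            ∫ ω, (r 0 ω) ^ 2 ∂(ℙ : Measure Ω)) /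
        (1 - (∫ ω, (ζ 0 ω) ^ 4 ∂(ℙ : Measure Ω)) * b ^ 4)) ∧
    (∀ t : ℕ, 1 ≤ t →
      ∫ ω, (r (t : ℤ) ω) ^ 2 * (r 0 ω) ^ 2 ∂(ℙ : Measure Ω) =
        (∫ ω, (r 0 ω) ^ 2 ∂(ℙ : Measure Ω)) * (a ^ 2 + c ^ 2) * (1 - b ^ (2 * t)) /
            (1 - b ^ 2) +
          b ^ (2 * t) * ∫ ω, (r 0 ω) ^ 4 ∂(ℙ : Measure Ω)) ∧
    (∀ t : ℕ,
      (∫ ω, (r (t : ℤ) ω) ^ 2 * (r 0 ω) ^ 2 ∂(ℙ : Measure Ω)) -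
          (∫ ω, (r (t : ℤ) ω) ^ 2 ∂(ℙ : Measure Ω)) * ∫ ω, (r 0 ω) ^ 2 ∂(ℙ : Measure Ω) =
        ((∫ ω, (r 0 ω) ^ 4 ∂(ℙ : Measure Ω)) -
            (∫ ω, (r 0 ω) ^ 2 ∂(ℙ : Measure Ω)) ^ 2) * b ^ (2 * t)) :=
  arch1_moments_general ζ hζmeas hindep hident hmean hvar hskew a b c hb hμ4b r hadapted hrstat hr4
    heq
end

section
/- Let (r_t) be a stationary solution of r_t = ζ_t (c² + (a + b r_{t−1})²)^{1/2} with b > 0, c > 0, b² < 1, Eζ₀ = 0, Eζ₀² = 1, μ₃ := Eζ₀³ > 0, E|r_0|³ < ∞, where ζ₀ has a bounded strictly positive density on ℝ. Let (r̃_t) be a stationary solution of the random-coefficient AR(1) equation r̃_t = κ ε_t + b η_t r̃_{t−1}, where ((ε_t, η_t)) are i.i.d. with Eε₀ = Eη₀ = 0, Eε₀² = Eη₀² = 1, ν_{0,3} := Eη₀³ > 0, E|r̃_0|³ < ∞, (ε₀, η₀) has a bounded strictly positive density on ℝ², and the parameters satisfy κρ = a, κ² = a² + c² with ρ := E[ε₀η₀].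 Then the bivariate distributions of (r_t, r_{t−1}) and (r̃_t, r̃_{t−1}) are different: for all sufficiently large K > 0, E[r_t³ 1(r_{t−1} < −K)] > 0 whereas E[r̃_t³ 1(r̃_{t−1} < −K)] < 0. -/
/-!
Given the past, `r_t³` has conditional mean `μ₃ σ(r_{t-1})³` with
`σ(x) = √(c² + (a + b x)²) ≥ c > 0`, whereas `r̃_t³` has conditional mean `p(r̃_{t-1})`, where
`p(x) = E[(κ ε₀ + b η₀ x)³]` is a cubic with leading coefficient `b³ ν_{0,3} > 0`, hence negative
far to the left. The positive densities make `{r_{t-1} < -K}` and `{r̃_{t-1} < -K}` non-null for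
every `K`, so the two truncated third moments have opposite signs for large `K`, while equal
bivariate laws would make them equal.
-/

open MeasureTheory ProbabilityTheory Filter

/-- σ-algebra generated by a family of ℝ²-valued innovations up to time `t`. -/
def pairFiltration {Ω : Type*} [MeasureSpace Ω] (ξ : ℤ → Ω → ℝ × ℝ) (t : ℤ) :
    MeasurableSpace Ω :=
  ⨆ s : {s : ℤ // s ≤ t}, MeasurableSpace.comap (ξ s) inferInstance

section General

variable {Ω : Type*} [MeasurableSpace Ω] {μ : Measure Ω}

lemma iSup_comap_le {α : Type*} [MeasurableSpace α] {ξ : ℤ → Ω → α}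
    (hξ : ∀ s, Measurable (ξ s)) (u : ℤ) :
    (⨆ s : {s : ℤ // s ≤ u}, MeasurableSpace.comap (ξ s) inferInstance) ≤ ‹MeasurableSpace Ω› :=
  iSup_le fun s => (hξ s).comap_le

lemma ProbabilityTheory.iIndepFun.indepFun_of_measurable_past {α β : Type*} [MeasurableSpace α]
    [MeasurableSpace β] {ξ : ℤ → Ω → α} (hξ : ∀ s, Measurable (ξ s)) (hind : iIndepFun ξ μ)
    {t u : ℤ} (hut : u < t) {Y : Ω → β}
    (hY : Measurable[⨆ s : {s : ℤ // s ≤ u}, MeasurableSpace.comap (ξ s) inferInstance] Y) :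
    IndepFun (ξ t) Y μ := by
  have hdisj : Disjoint ({t} : Set ℤ) {s | s ≤ u} :=
    Set.disjoint_singleton_left.2 fun h : t ≤ u => (lt_irrefl _ (hut.trans_le h))
  refine indep_of_indep_of_le_right
    (indep_of_indep_of_le_left (indep_iSup_of_disjoint (fun i => (hξ i).comap_le) hind hdisj)
      (le_iSup₂_of_le t rfl le_rfl)) ?_
  refine (measurable_iff_comap_le.1 hY).trans ?_
  rw [iSup_subtype']
  exact le_rfl

lemma measure_preimage_pos_of_map_eq_withDensity {α : Type*} [TopologicalSpace α]
    [MeasurableSpace α] [OpensMeasurableSpace α] {ν : Measure α} [ν.IsOpenPosMeasure]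
    {X : Ω → α} (hX : Measurable X) {f : α → ℝ} (hf : Measurable f) (hfpos : ∀ x, 0 < f x)
    (hmap : μ.map X = ν.withDensity fun x => ENNReal.ofReal (f x))
    {U : Set α} (hU : IsOpen U) (hne : U.Nonempty) : 0 < μ (X ⁻¹' U) := by
  rw [← Measure.map_apply hX hU.measurableSet, hmap, pos_iff_ne_zero, Ne,
    withDensity_apply_eq_zero hf.ennreal_ofReal]
  refine fun h => (hU.measure_pos ν hne).ne' (measure_mono_null (fun x hx => ?_) h)
  exact ⟨(ENNReal.ofReal_pos.2 (hfpos x)).ne', hx⟩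

lemma exists_measure_abs_le_pos [NeZero μ] (Y : Ω → ℝ) : ∃ D : ℝ, 0 < μ {ω | |Y ω| ≤ D} := by
  by_contra! h
  have hcover : (⋃ n : ℕ, {ω | |Y ω| ≤ n}) = Set.univ :=
    Set.eq_univ_of_forall fun ω => Set.mem_iUnion.2 (exists_nat_ge |Y ω|)
  exact NeZero.ne μ (Measure.measure_univ_eq_zero.1
    (hcover ▸ measure_iUnion_null fun n => nonpos_iff_eq_zero.1 (h n)))

lemma integral_ite_lt_pos {X : Ω → ℝ} {φ : ℝ → ℝ} {K : ℝ}
    (hint : Integrable (fun ω => if X ω < K then φ (X ω) else 0) μ)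
    (hφ : ∀ x < K, 0 < φ x) (hμ : 0 < μ {ω | X ω < K}) :
    0 < ∫ ω, (if X ω < K then φ (X ω) else 0) ∂μ := by
  have hnonneg : 0 ≤ fun ω => if X ω < K then φ (X ω) else 0 := fun ω => by
    dsimp only
    split_ifs with h
    exacts [(hφ _ h).le, le_rfl]
  rw [integral_pos_iff_support_of_nonneg hnonneg hint]
  refine hμ.trans_le (measure_mono fun ω (h : X ω < K) => ?_)
  simp [Function.mem_support, h, (hφ _ h).ne']

lemma integral_ite_lt_neg {X : Ω → ℝ} {φ : ℝ → ℝ} {K : ℝ}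
    (hint : Integrable (fun ω => if X ω < K then φ (X ω) else 0) μ)
    (hφ : ∀ x < K, φ x < 0) (hμ : 0 < μ {ω | X ω < K}) :
    ∫ ω, (if X ω < K then φ (X ω) else 0) ∂μ < 0 := by
  have hneg : (fun ω => if X ω < K then -φ (X ω) else 0)
      = fun ω => -(if X ω < K then φ (X ω) else 0) := by
    funext ω
    split_ifs <;> simp
  have hpos := integral_ite_lt_pos (φ := fun x => -φ x) (hneg ▸ hint.neg)
    (fun x hx => neg_pos.2 (hφ x hx)) hμ
  rw [hneg, integral_neg] at hpos
  exact neg_pos.1 hpos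

lemma abs_pow_mul_abs_pow_le (x y : ℝ) (i j : ℕ) :
    |x| ^ i * |y| ^ j ≤ |x| ^ (i + j) + |y| ^ (i + j) := by
  calc |x| ^ i * |y| ^ j ≤ max |x| |y| ^ i * max |x| |y| ^ j := by
        gcongr <;> simp
    _ = max (|x| ^ (i + j)) (|y| ^ (i + j)) := by
        rw [← pow_add, pow_left_monotoneOn.map_max] <;> simp
    _ ≤ _ := max_le_add_of_nonneg (by positivity) (by positivity)

lemma MeasureTheory.Integrable.ite_lt {f X : Ω → ℝ} (hf : Integrable f μ) (hX : Measurable X)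
    (K : ℝ) :
    Integrable (fun ω => if X ω < K then f ω else 0) μ :=
  hf.indicator (measurableSet_lt hX measurable_const)

lemma ProbabilityTheory.IndepFun.integral_sum_mul_eq {ι β γ : Type*} [MeasurableSpace β]
    [MeasurableSpace γ] (s : Finset ι) {ξ : Ω → β} {X : Ω → γ} (hind : IndepFun ξ X μ)
    {F : ι → β → ℝ} {G : ι → γ → ℝ} (hF : ∀ i ∈ s, Measurable (F i))
    (hG : ∀ i ∈ s, Measurable (G i)) (hFi : ∀ i ∈ s, Integrable (fun ω => F i (ξ ω)) μ)
    (hGi : ∀ i ∈ s, Integrable (fun ω => G i (X ω)) μ) :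
    ∫ ω, ∑ i ∈ s, F i (ξ ω) * G i (X ω) ∂μ
      = ∫ ω, ∑ i ∈ s, (∫ ω', F i (ξ ω') ∂μ) * G i (X ω) ∂μ := by
  have hFG : ∀ i ∈ s, IndepFun (fun ω => F i (ξ ω)) (fun ω => G i (X ω)) μ :=
    fun i hi => hind.comp (hF i hi) (hG i hi)
  rw [integral_finsetSum s (f := fun i ω => F i (ξ ω) * G i (X ω))
      fun i hi => (hFG i hi).integrable_mul (hFi i hi) (hGi i hi),
    integral_finsetSum s fun i hi => (hGi i hi).const_mul (∫ ω', F i (ξ ω') ∂μ)]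
  refine Finset.sum_congr rfl fun i hi => ?_
  rw [integral_const_mul, (hFG i hi).integral_fun_mul_eq_mul_integral
    (hFi i hi).aestronglyMeasurable (hGi i hi).aestronglyMeasurable]

variable [IsFiniteMeasure μ]

lemma MeasureTheory.MemLp.integrable_pow_of_le {Y : Ω → ℝ} {n j : ℕ} (hY : MemLp Y n μ)
    (hj : j ≤ n) : Integrable (fun ω => Y ω ^ j) μ := by
  refine ((hY.mono_exponent (by exact_mod_cast hj)).integrable_norm_pow').mono'
    (hY.aestronglyMeasurable.pow j) (.of_forall fun ω => ?_)
  simp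

lemma integrable_pow_mul_pow {U V : Ω → ℝ} {n : ℕ} (hU : MemLp U n μ) (hV : MemLp V n μ)
    {i j : ℕ} (hij : i + j = n) : Integrable (fun ω => U ω ^ i * V ω ^ j) μ := by
  refine (hU.integrable_norm_pow'.add hV.integrable_norm_pow').mono'
    ((hU.aestronglyMeasurable.pow i).mul (hV.aestronglyMeasurable.pow j))
    (.of_forall fun ω => ?_)
  simpa [abs_mul, abs_pow, hij] using abs_pow_mul_abs_pow_le (U ω) (V ω) i j

end General

lemma cubic_le_neg_one {A B C D x : ℝ} (hD : 0 < D)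
    (hx : x ≤ -max 1 ((|A| + |B| + |C| + 1) / D)) :
    A + B * x + C * x ^ 2 + D * x ^ 3 ≤ -1 := by
  have hx1 : x ≤ -1 := hx.trans (neg_le_neg (le_max_left _ _))
  have hDx : D * x ≤ -(|A| + |B| + |C| + 1) := by
    have := hx.trans (neg_le_neg (le_max_right _ _))
    rw [le_neg, div_le_iff₀ hD] at this
    linarith
  have hsq : 1 ≤ x ^ 2 := by nlinarith
  have hA : A ≤ |A| * x ^ 2 := (le_abs_self A).trans (le_mul_of_one_le_right (abs_nonneg A) hsq)
  have hB : B * x ≤ |B| * x ^ 2 := calc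
    B * x ≤ |B| * |x| := (le_abs_self _).trans (abs_mul B x).le
    _ ≤ |B| * x ^ 2 := mul_le_mul_of_nonneg_left
      (by rw [abs_of_nonpos (by linarith)]; nlinarith) (abs_nonneg B)
  have hC : C * x ^ 2 ≤ |C| * x ^ 2 := mul_le_mul_of_nonneg_right (le_abs_self C) (sq_nonneg x)
  have hD' : D * x ^ 3 ≤ -(|A| + |B| + |C| + 1) * x ^ 2 := by
    rw [show D * x ^ 3 = D * x * x ^ 2 by ring]
    exact mul_le_mul_of_nonneg_right hDx (sq_nonneg x)
  nlinarith

noncomputable def affineCubeCoeff (κ b : ℝ) (j : ℕ) (p : ℝ × ℝ) : ℝ :=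
  (b * p.2) ^ j * (κ * p.1) ^ (3 - j) * (Nat.choose 3 j)

lemma affine_cube_eq_sum (κ b x : ℝ) (p : ℝ × ℝ) :
    (κ * p.1 + b * p.2 * x) ^ 3 = ∑ j ∈ Finset.range 4, affineCubeCoeff κ b j p * x ^ j := by
  simp [Finset.sum_range_succ, affineCubeCoeff]
  ring

@[fun_prop]
lemma measurable_affineCubeCoeff (κ b : ℝ) (j : ℕ) : Measurable (affineCubeCoeff κ b j) := by
  unfold affineCubeCoeff
  fun_prop

section AffineCube

variable {Ω : Type*} [MeasurableSpace Ω] {μ : Measure Ω} [IsFiniteMeasure μ]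
  {ξ : Ω → ℝ × ℝ} {X : Ω → ℝ}

lemma integrable_affineCubeCoeff (h1 : MemLp (fun ω => (ξ ω).1) 3 μ)
    (h2 : MemLp (fun ω => (ξ ω).2) 3 μ) (κ b : ℝ) {j : ℕ} (hj : j ≤ 3) :
    Integrable (fun ω => affineCubeCoeff κ b j (ξ ω)) μ := by
  refine ((integrable_pow_mul_pow (n := 3) h2 h1 (Nat.add_sub_cancel' hj)).const_mul
    (b ^ j * κ ^ (3 - j) * Nat.choose 3 j)).congr (.of_forall fun ω => ?_)
  simp only [affineCubeCoeff]
  ring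

lemma ProbabilityTheory.IndepFun.integral_ite_affine_cube_eq (hind : IndepFun ξ X μ)
    (hX : Measurable X) (h1 : MemLp (fun ω => (ξ ω).1) 3 μ) (h2 : MemLp (fun ω => (ξ ω).2) 3 μ)
    (hX3 : MemLp X 3 μ) (κ b K : ℝ) :
    ∫ ω, (if X ω < K then (κ * (ξ ω).1 + b * (ξ ω).2 * X ω) ^ 3 else 0) ∂μ
      = ∫ ω, (if X ω < K then
          ∑ j ∈ Finset.range 4, (∫ ω', affineCubeCoeff κ b j (ξ ω') ∂μ) * X ω ^ j else 0) ∂μ := by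
  have key := hind.integral_sum_mul_eq (Finset.range 4) (F := affineCubeCoeff κ b)
    (G := fun j x => if x < K then x ^ j else 0)
    (fun j _ => measurable_affineCubeCoeff κ b j)
    (fun j _ => Measurable.ite measurableSet_Iio (measurable_id.pow_const j) measurable_const)
    (fun j hj => integrable_affineCubeCoeff h1 h2 κ b (Nat.lt_succ_iff.1 (Finset.mem_range.1 hj)))
    (fun j hj => ((hX3.integrable_pow_of_le (n := 3)
      (Nat.lt_succ_iff.1 (Finset.mem_range.1 hj))).ite_lt hX K))
  convert key using 2 <;> funext ω <;> split_ifs <;> simp [affine_cube_eq_sum]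

end AffineCube

lemma le_sqrt_sq_add_sq (c y : ℝ) : c ≤ √(c ^ 2 + y ^ 2) :=
  Real.le_sqrt_of_sq_le (le_add_of_nonneg_right (sq_nonneg y))

lemma sqrt_sq_add_sq_le {c : ℝ} (hc : 0 ≤ c) (y : ℝ) : √(c ^ 2 + y ^ 2) ≤ c + |y| :=
  Real.sqrt_le_iff.2 ⟨by positivity, by nlinarith [abs_nonneg y, sq_abs y]⟩

section ARCH

variable {Ω : Type*} [MeasureSpace Ω] {ζ : ℤ → Ω → ℝ} {f : ℝ → ℝ} {a b c : ℝ} {r : ℤ → Ω → ℝ}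

lemma arch1_measure_lt_pos {s : ℤ} (hζ : Measurable (ζ s))
    (hident : IdentDistrib (ζ s) (ζ 0) ℙ ℙ) (hfmeas : Measurable f) (hfpos : ∀ x, 0 < f x)
    (hfdens : Measure.map (ζ 0) ℙ = volume.withDensity fun x => ENNReal.ofReal (f x))
    (hc : 0 < c) (hreq : r s =ᵐ[ℙ] fun ω => ζ s ω * √(c ^ 2 + (a + b * r (s - 1) ω) ^ 2))
    {K : ℝ} (hK : 0 < K) : 0 < (ℙ : Measure Ω) {ω | r s ω < -K} := by
  have hζpos : 0 < (ℙ : Measure Ω) (ζ s ⁻¹' Set.Iio (-K / c)) :=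
    measure_preimage_pos_of_map_eq_withDensity hζ hfmeas hfpos (hident.map_eq.trans hfdens)
      isOpen_Iio Set.nonempty_Iio
  refine hζpos.trans_le (measure_mono_ae ?_)
  filter_upwards [hreq] with ω hω (hlt : ζ s ω < -K / c)
  have hneg : ζ s ω ≤ 0 := hlt.le.trans (by rw [neg_div]; exact neg_nonpos.2 (div_pos hK hc).le)
  calc r s ω = ζ s ω * √(c ^ 2 + (a + b * r (s - 1) ω) ^ 2) := hω
    _ ≤ ζ s ω * c :=
      mul_le_mul_of_nonpos_left (le_sqrt_sq_add_sq c _) hneg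
    _ < -K := (lt_div_iff₀ hc).1 hlt

lemma arch1_integral_ite_cube_pos [IsProbabilityMeasure (ℙ : Measure Ω)]
    (hζmeas : ∀ t, Measurable (ζ t)) (hζindep : iIndepFun ζ ℙ)
    (hζident : ∀ t, IdentDistrib (ζ t) (ζ 0) ℙ ℙ)
    (hζskew : 0 < ∫ ω, ζ 0 ω ^ 3 ∂ℙ) (hfmeas : Measurable f) (hfpos : ∀ x, 0 < f x)
    (hfdens : Measure.map (ζ 0) ℙ = volume.withDensity fun x => ENNReal.ofReal (f x))
    (hc : 0 < c) (hradapted : ∀ t, Measurable[noiseFiltration ζ t] (r t))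
    (hr3 : ∀ t, MemLp (r t) 3 ℙ)
    (hreq : ∀ t, r t =ᵐ[ℙ] fun ω => ζ t ω * √(c ^ 2 + (a + b * r (t - 1) ω) ^ 2))
    (t : ℤ) {K : ℝ} (hK : 0 < K) :
    0 < ∫ ω, (if r (t - 1) ω < -K then r t ω ^ 3 else 0) ∂ℙ := by
  set σ : ℝ → ℝ := fun x => √(c ^ 2 + (a + b * x) ^ 2)
  set G : ℝ → ℝ := fun x => if x < -K then σ x ^ 3 else 0
  have hX : Measurable (r (t - 1)) := (hradapted _).mono (iSup_comap_le hζmeas _) le_rfl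
  have hG : Measurable G := Measurable.ite measurableSet_Iio (by fun_prop) measurable_const
  have hind : IndepFun (fun ω => ζ t ω ^ 3) (fun ω => G (r (t - 1) ω)) ℙ :=
    (hζindep.indepFun_of_measurable_past hζmeas (by omega : t - 1 < t) (hradapted (t - 1))).comp
      (measurable_id.pow_const 3) hG
  have hae : (fun ω => if r (t - 1) ω < -K then r t ω ^ 3 else 0)
      =ᵐ[ℙ] fun ω => ζ t ω ^ 3 * G (r (t - 1) ω) := by
    filter_upwards [hreq t] with ω hω
    split_ifs with h <;> simp [G, σ, h, hω, mul_pow]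
  have hσ3 : MemLp (fun ω => σ (r (t - 1) ω)) 3 ℙ := by
    refine ((memLp_const c).add ((memLp_const a).add ((hr3 (t - 1)).const_mul b)).norm).mono'
      (by fun_prop) (.of_forall fun ω => ?_)
    rw [Real.norm_of_nonneg (Real.sqrt_nonneg _)]
    simp only [Pi.add_apply, Real.norm_eq_abs]
    exact sqrt_sq_add_sq_le hc.le _
  have hGint : Integrable (fun ω => G (r (t - 1) ω)) ℙ :=
    (hσ3.integrable_pow_of_le (n := 3) le_rfl).ite_lt hX (-K)
  have hζt3 : ∫ ω, ζ t ω ^ 3 ∂ℙ = ∫ ω, ζ 0 ω ^ 3 ∂ℙ :=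
    ((hζident t).comp (measurable_id.pow_const 3)).integral_eq
  rw [integral_congr_ae hae, hind.integral_fun_mul_eq_mul_integral (by fun_prop)
    hGint.aestronglyMeasurable, hζt3]
  refine mul_pos hζskew (integral_ite_lt_pos (φ := fun x => σ x ^ 3) hGint (fun x _ => ?_)
    (arch1_measure_lt_pos (hζmeas _) (hζident _) hfmeas hfpos hfdens hc (hreq _) hK))
  exact pow_pos (hc.trans_le (le_sqrt_sq_add_sq c _)) 3

end ARCH

section RCAR

variable {Ω : Type*} [MeasureSpace Ω] {ε η : ℤ → Ω → ℝ} {g : ℝ × ℝ → ℝ} {b κ : ℝ}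
  {rt : ℤ → Ω → ℝ}

lemma rcar1_measure_lt_pos [IsProbabilityMeasure (ℙ : Measure Ω)] {s : ℤ}
    (hξ : Measurable fun ω => (ε s ω, η s ω))
    (hident : IdentDistrib (fun ω => (ε s ω, η s ω)) (fun ω => (ε 0 ω, η 0 ω)) ℙ ℙ)
    (hgmeas : Measurable g) (hgpos : ∀ x, 0 < g x)
    (hgdens : Measure.map (fun ω => (ε 0 ω, η 0 ω)) ℙ =
      volume.withDensity fun x => ENNReal.ofReal (g x))
    (hκ : κ ≠ 0) (hind : IndepFun (fun ω => (ε s ω, η s ω)) (rt (s - 1)) ℙ)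
    (hrteq : rt s =ᵐ[ℙ] fun ω => κ * ε s ω + b * η s ω * rt (s - 1) ω) (K : ℝ) :
    0 < (ℙ : Measure Ω) {ω | rt s ω < -K} := by
  obtain ⟨D, hD⟩ := exists_measure_abs_le_pos (μ := ℙ) (rt (s - 1))
  -- `W` is open, hence charged by the positive density, and `ξ_s ∈ W`, `|r̃_{s-1}| ≤ D` force
  -- `r̃_s < -K`.
  set W : Set (ℝ × ℝ) := {p | κ * p.1 + |b * p.2| * D < -K}
  have hWopen : IsOpen W := isOpen_lt (by fun_prop) continuous_const
  have hWne : W.Nonempty := ⟨(-(K + 1) / κ, 0), by simp [W, mul_div_cancel₀ _ hκ]⟩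
  have hpos : 0 < (ℙ : Measure Ω)
      ((fun ω => (ε s ω, η s ω)) ⁻¹' W ∩ rt (s - 1) ⁻¹' {y | |y| ≤ D}) := by
    rw [hind.measure_inter_preimage_eq_mul _ _ hWopen.measurableSet
      (measurableSet_le continuous_abs.measurable measurable_const)]
    exact ENNReal.mul_pos (measure_preimage_pos_of_map_eq_withDensity hξ hgmeas hgpos
      (hident.map_eq.trans hgdens) hWopen hWne).ne' hD.ne'
  refine hpos.trans_le (measure_mono_ae ?_)
  filter_upwards [hrteq] with ω hω ⟨(hW : κ * ε s ω + |b * η s ω| * D < -K),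
    (hY : |rt (s - 1) ω| ≤ D)⟩
  calc rt s ω = κ * ε s ω + b * η s ω * rt (s - 1) ω := hω
    _ ≤ κ * ε s ω + |b * η s ω| * D := (add_le_add_iff_left _).2 ((le_abs_self _).trans
      ((abs_mul _ _).trans_le (mul_le_mul_of_nonneg_left hY (abs_nonneg _))))
    _ < -K := hW

lemma rcar1_integral_ite_cube_neg [IsProbabilityMeasure (ℙ : Measure Ω)]
    (hεmeas : ∀ t, Measurable (ε t)) (hηmeas : ∀ t, Measurable (η t))
    (hεηindep : iIndepFun (fun t ω => (ε t ω, η t ω)) ℙ)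
    (hεηident : ∀ t, IdentDistrib (fun ω => (ε t ω, η t ω)) (fun ω => (ε 0 ω, η 0 ω)) ℙ ℙ)
    (hε3 : MemLp (ε 0) 3 ℙ) (hη3 : MemLp (η 0) 3 ℙ) (hηskew : 0 < ∫ ω, η 0 ω ^ 3 ∂ℙ)
    (hgmeas : Measurable g) (hgpos : ∀ x, 0 < g x)
    (hgdens : Measure.map (fun ω => (ε 0 ω, η 0 ω)) ℙ =
      volume.withDensity fun x => ENNReal.ofReal (g x))
    (hb : 0 < b) (hκ : κ ≠ 0)
    (hrtadapted : ∀ t, Measurable[pairFiltration (fun s ω => (ε s ω, η s ω)) t] (rt t))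
    (hrt3 : ∀ t, MemLp (rt t) 3 ℙ)
    (hrteq : ∀ t, rt t =ᵐ[ℙ] fun ω => κ * ε t ω + b * η t ω * rt (t - 1) ω) (t : ℤ) :
    ∃ K₀ : ℝ, 0 < K₀ ∧ ∀ K : ℝ, K₀ ≤ K →
      ∫ ω, (if rt (t - 1) ω < -K then rt t ω ^ 3 else 0) ∂ℙ < 0 := by
  set ξ : ℤ → Ω → ℝ × ℝ := fun s ω => (ε s ω, η s ω)
  have hξ : ∀ s, Measurable (ξ s) := fun s => (hεmeas s).prodMk (hηmeas s)
  have hX : Measurable (rt (t - 1)) := (hrtadapted _).mono (iSup_comap_le hξ _) le_rfl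
  have hpast : ∀ s, IndepFun (ξ s) (rt (s - 1)) ℙ := fun s =>
    hεηindep.indepFun_of_measurable_past hξ (by omega : s - 1 < s) (hrtadapted (s - 1))
  set m : ℕ → ℝ := fun j => ∫ ω, affineCubeCoeff κ b j (ξ 0 ω) ∂ℙ
  have hm : ∀ j, ∫ ω, affineCubeCoeff κ b j (ξ t ω) ∂ℙ = m j := fun j =>
    ((hεηident t).comp (measurable_affineCubeCoeff κ b j)).integral_eq
  have hm3 : 0 < m 3 := by
    simpa [m, ξ, affineCubeCoeff, mul_pow, integral_const_mul] using mul_pos (pow_pos hb 3) hηskew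
  refine ⟨max 1 ((|m 0| + |m 1| + |m 2| + 1) / m 3), by positivity, fun K hK => ?_⟩
  have hεt3 : MemLp (ε t) 3 ℙ := ((hεηident t).comp measurable_fst).symm.memLp_snd hε3
  have hηt3 : MemLp (η t) 3 ℙ := ((hεηident t).comp measurable_snd).symm.memLp_snd hη3
  have hcube : ∫ ω, (if rt (t - 1) ω < -K then rt t ω ^ 3 else 0) ∂ℙ
      = ∫ ω, (if rt (t - 1) ω < -K then
          ∑ j ∈ Finset.range 4, m j * rt (t - 1) ω ^ j else 0) ∂ℙ := by
    have hae : (fun ω => if rt (t - 1) ω < -K then rt t ω ^ 3 else 0) =ᵐ[ℙ]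
        fun ω => if rt (t - 1) ω < -K then
          (κ * (ξ t ω).1 + b * (ξ t ω).2 * rt (t - 1) ω) ^ 3 else 0 := by
      filter_upwards [hrteq t] with ω hω
      rw [hω]
    rw [integral_congr_ae hae, (hpast t).integral_ite_affine_cube_eq hX hεt3 hηt3 (hrt3 _) κ b (-K)]
    simp only [ξ, hm]
  have hint : Integrable (fun ω => ∑ j ∈ Finset.range 4, m j * rt (t - 1) ω ^ j) ℙ :=
    integrable_finsetSum _ fun j hj => ((hrt3 _).integrable_pow_of_le (n := 3)
      (Nat.lt_succ_iff.1 (Finset.mem_range.1 hj))).const_mul (m j)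
  rw [hcube]
  refine integral_ite_lt_neg (φ := fun x => ∑ j ∈ Finset.range 4, m j * x ^ j)
    (hint.ite_lt hX (-K)) (fun x hx => ?_)
    (rcar1_measure_lt_pos (hξ _) (hεηident _) hgmeas hgpos hgdens hκ (hpast _) (hrteq _) K)
  have := cubic_le_neg_one (A := m 0) (B := m 1) (C := m 2) hm3 (hx.le.trans (neg_le_neg hK))
  simp only [Finset.sum_range_succ, Finset.sum_range_zero]
  linarith [this]

end RCAR

theorem arch1_vs_rcar1_distributions_differ_general
    {Ω : Type*} [MeasureSpace Ω] [IsProbabilityMeasure (ℙ : Measure Ω)]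
    -- the ARCH(1) noise and its bounded strictly positive density
    (ζ : ℤ → Ω → ℝ) (hζmeas : ∀ t, Measurable (ζ t))
    (hζindep : iIndepFun ζ (ℙ : Measure Ω))
    (hζident : ∀ t, IdentDistrib (ζ t) (ζ 0) (ℙ : Measure Ω) (ℙ : Measure Ω))
    (hζskew : 0 < ∫ ω, (ζ 0 ω) ^ 3 ∂(ℙ : Measure Ω))
    (f : ℝ → ℝ) (hfmeas : Measurable f) (hfpos : ∀ x, 0 < f x)
    (hfdens : Measure.map (ζ 0) (ℙ : Measure Ω) =
      (volume : Measure ℝ).withDensity fun x => ENNReal.ofReal (f x))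
    -- the AR(1) innovations and their bounded strictly positive joint density
    (ε η : ℤ → Ω → ℝ) (hεmeas : ∀ t, Measurable (ε t)) (hηmeas : ∀ t, Measurable (η t))
    (hεηindep : iIndepFun
      (fun t ω => (ε t ω, η t ω)) (ℙ : Measure Ω))
    (hεηident : ∀ t, IdentDistrib (fun ω => (ε t ω, η t ω)) (fun ω => (ε 0 ω, η 0 ω))
      (ℙ : Measure Ω) (ℙ : Measure Ω))
    (hε3 : MemLp (ε 0) 3 (ℙ : Measure Ω)) (hη3 : MemLp (η 0) 3 (ℙ : Measure Ω))
    (hη0skew : 0 < ∫ ω, (η 0 ω) ^ 3 ∂(ℙ : Measure Ω))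
    (g : ℝ × ℝ → ℝ) (hgmeas : Measurable g) (hgpos : ∀ x, 0 < g x)
    (hgdens : Measure.map (fun ω => (ε 0 ω, η 0 ω)) (ℙ : Measure Ω) =
      (volume : Measure (ℝ × ℝ)).withDensity fun x => ENNReal.ofReal (g x))
    -- parameters
    (a b c κ : ℝ) (hb : 0 < b) (hc : 0 < c)
    (hκ2 : κ ^ 2 = a ^ 2 + c ^ 2)
    -- the stationary ARCH(1) solution
    (r : ℤ → Ω → ℝ)
    (hradapted : ∀ t : ℤ, Measurable[noiseFiltration ζ t] (r t))
    (hr3 : ∀ t : ℤ, MemLp (r t) 3 (ℙ : Measure Ω))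
    (hreq : ∀ t : ℤ, r t =ᵐ[(ℙ : Measure Ω)]
      fun ω => ζ t ω * Real.sqrt (c ^ 2 + (a + b * r (t - 1) ω) ^ 2))
    -- the stationary random-coefficient AR(1) solution
    (rt : ℤ → Ω → ℝ)
    (hrtadapted : ∀ t : ℤ, Measurable[pairFiltration (fun s ω => (ε s ω, η s ω)) t] (rt t))
    (hrt3 : ∀ t : ℤ, MemLp (rt t) 3 (ℙ : Measure Ω))
    (hrteq : ∀ t : ℤ, rt t =ᵐ[(ℙ : Measure Ω)]
      fun ω => κ * ε t ω + b * η t ω * rt (t - 1) ω) :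
    ∀ t : ℤ,
      (∃ K₀ : ℝ, 0 < K₀ ∧ ∀ K : ℝ, K₀ ≤ K →
        (0 < ∫ ω, (if r (t - 1) ω < -K then (r t ω) ^ 3 else 0) ∂(ℙ : Measure Ω)) ∧
        (∫ ω, (if rt (t - 1) ω < -K then (rt t ω) ^ 3 else 0) ∂(ℙ : Measure Ω)) < 0) ∧
      ¬ IdentDistrib (fun ω => (r t ω, r (t - 1) ω)) (fun ω => (rt t ω, rt (t - 1) ω))
          (ℙ : Measure Ω) (ℙ : Measure Ω) := by
  intro t
  have hκ : κ ≠ 0 := by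
    rintro rfl
    nlinarith [sq_nonneg a]
  obtain ⟨K₀, hK₀, hAR⟩ := rcar1_integral_ite_cube_neg hεmeas hηmeas hεηindep hεηident hε3 hη3
    hη0skew hgmeas hgpos hgdens hb hκ hrtadapted hrt3 hrteq t
  have hARCH : ∀ K, 0 < K →
      0 < ∫ ω, (if r (t - 1) ω < -K then r t ω ^ 3 else 0) ∂(ℙ : Measure Ω) := fun K hK =>
    arch1_integral_ite_cube_pos hζmeas hζindep hζident hζskew hfmeas hfpos hfdens hc hradapted
      hr3 hreq t hK
  refine ⟨⟨K₀, hK₀, fun K hK => ⟨hARCH K (hK₀.trans_le hK), hAR K hK⟩⟩, fun hid => ?_⟩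
  have htrunc : Measurable fun p : ℝ × ℝ => if p.2 < -K₀ then p.1 ^ 3 else 0 :=
    Measurable.ite (measurableSet_lt measurable_snd measurable_const)
      (measurable_fst.pow_const 3) measurable_const
  have heq := (hid.comp htrunc).integral_eq
  exact (hAR K₀ le_rfl).not_ge (heq ▸ (hARCH K₀ hK₀).le)

/-- **Example 2 (distinctness of the asymmetric ARCH(1) and the random-coefficient AR(1))**:
under the stated positivity, density and moment conditions and the parameter matching
`κρ = a`, `κ² = a² + c²`, for all large `K` one has `E[r_t³ 1(r_{t-1} < -K)] > 0` while
`E[r̃_t³ 1(r̃_{t-1} < -K)] < 0`; in particular the bivariate distributions of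
`(r_t, r_{t-1})` and `(r̃_t, r̃_{t-1})` are different. -/
theorem arch1_vs_rcar1_distributions_differ
    {Ω : Type*} [MeasureSpace Ω] [IsProbabilityMeasure (ℙ : Measure Ω)]
    -- the ARCH(1) noise and its bounded strictly positive density
    (ζ : ℤ → Ω → ℝ) (hζmeas : ∀ t, Measurable (ζ t))
    (hζindep : iIndepFun ζ (ℙ : Measure Ω))
    (hζident : ∀ t, IdentDistrib (ζ t) (ζ 0) (ℙ : Measure Ω) (ℙ : Measure Ω))
    (hζmean : ∫ ω, ζ 0 ω ∂(ℙ : Measure Ω) = 0)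
    (hζvar : ∫ ω, (ζ 0 ω) ^ 2 ∂(ℙ : Measure Ω) = 1)
    (hζ3 : MemLp (ζ 0) 3 (ℙ : Measure Ω))
    (hζskew : 0 < ∫ ω, (ζ 0 ω) ^ 3 ∂(ℙ : Measure Ω))
    (f : ℝ → ℝ) (hfmeas : Measurable f) (hfpos : ∀ x, 0 < f x)
    (hfbdd : ∃ M : ℝ, ∀ x, f x ≤ M)
    (hfdens : Measure.map (ζ 0) (ℙ : Measure Ω) =
      (volume : Measure ℝ).withDensity fun x => ENNReal.ofReal (f x))
    -- the AR(1) innovations and their bounded strictly positive joint density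
    (ε η : ℤ → Ω → ℝ) (hεmeas : ∀ t, Measurable (ε t)) (hηmeas : ∀ t, Measurable (η t))
    (hεηindep : iIndepFun
      (fun t ω => (ε t ω, η t ω)) (ℙ : Measure Ω))
    (hεηident : ∀ t, IdentDistrib (fun ω => (ε t ω, η t ω)) (fun ω => (ε 0 ω, η 0 ω))
      (ℙ : Measure Ω) (ℙ : Measure Ω))
    (hεmean : ∫ ω, ε 0 ω ∂(ℙ : Measure Ω) = 0)
    (hηmean : ∫ ω, η 0 ω ∂(ℙ : Measure Ω) = 0)
    (hεvar : ∫ ω, (ε 0 ω) ^ 2 ∂(ℙ : Measure Ω) = 1)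
    (hηvar : ∫ ω, (η 0 ω) ^ 2 ∂(ℙ : Measure Ω) = 1)
    (hε3 : MemLp (ε 0) 3 (ℙ : Measure Ω)) (hη3 : MemLp (η 0) 3 (ℙ : Measure Ω))
    (hη0skew : 0 < ∫ ω, (η 0 ω) ^ 3 ∂(ℙ : Measure Ω))
    (g : ℝ × ℝ → ℝ) (hgmeas : Measurable g) (hgpos : ∀ x, 0 < g x)
    (hgbdd : ∃ M : ℝ, ∀ x, g x ≤ M)
    (hgdens : Measure.map (fun ω => (ε 0 ω, η 0 ω)) (ℙ : Measure Ω) =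
      (volume : Measure (ℝ × ℝ)).withDensity fun x => ENNReal.ofReal (g x))
    -- parameters
    (a b c κ : ℝ) (hb : 0 < b) (hc : 0 < c) (hb1 : b ^ 2 < 1)
    (hκρ : κ * (∫ ω, ε 0 ω * η 0 ω ∂(ℙ : Measure Ω)) = a)
    (hκ2 : κ ^ 2 = a ^ 2 + c ^ 2)
    -- the stationary ARCH(1) solution
    (r : ℤ → Ω → ℝ)
    (hradapted : ∀ t : ℤ, Measurable[noiseFiltration ζ t] (r t))
    (hrstat : StrictStationary r)
    (hr3 : ∀ t : ℤ, MemLp (r t) 3 (ℙ : Measure Ω))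
    (hreq : ∀ t : ℤ, r t =ᵐ[(ℙ : Measure Ω)]
      fun ω => ζ t ω * Real.sqrt (c ^ 2 + (a + b * r (t - 1) ω) ^ 2))
    -- the stationary random-coefficient AR(1) solution
    (rt : ℤ → Ω → ℝ)
    (hrtadapted : ∀ t : ℤ, Measurable[pairFiltration (fun s ω => (ε s ω, η s ω)) t] (rt t))
    (hrtstat : StrictStationary rt)
    (hrt3 : ∀ t : ℤ, MemLp (rt t) 3 (ℙ : Measure Ω))
    (hrteq : ∀ t : ℤ, rt t =ᵐ[(ℙ : Measure Ω)]
      fun ω => κ * ε t ω + b * η t ω * rt (t - 1) ω) :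
    ∀ t : ℤ,
      (∃ K₀ : ℝ, 0 < K₀ ∧ ∀ K : ℝ, K₀ ≤ K →
        (0 < ∫ ω, (if r (t - 1) ω < -K then (r t ω) ^ 3 else 0) ∂(ℙ : Measure Ω)) ∧
        (∫ ω, (if rt (t - 1) ω < -K then (rt t ω) ^ 3 else 0) ∂(ℙ : Measure Ω)) < 0) ∧
      ¬ IdentDistrib (fun ω => (r t ω, r (t - 1) ω)) (fun ω => (rt t ω, rt (t - 1) ω))
          (ℙ : Measure Ω) (ℙ : Measure Ω) :=
  arch1_vs_rcar1_distributions_differ_general ζ hζmeas hζindep hζident hζskew f hfmeas hfpos hfdens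
    ε η hεmeas hηmeas hεηindep hεηident hε3 hη3 hη0skew g hgmeas hgpos hgdens a b c κ hb hc hκ2 r
    hradapted hr3 hreq rt hrtadapted hrt3 hrteq
end

section
/- Let 0 < d < 1/2. There exists a constant C (depending only on d) such that for every integer L ≥ 1, Σ_{i,j ≥ 1, |i−j| > L} i^{2d−2} j^{2d−2} ≤ C L^{2d−1}. -/
/-!
Split the pairs according to the sign of `i - j`; by symmetry it suffices to bound the pairs with
`j > i + L`. For `a = 2d - 2 < -1` the tail `∑_{j > M} j^a` is at most `R M^(a+1)`, where
`R = ∑ k^a`: on the block `[kM, (k+1)M)` each term is at most `(kM)^a = k^a M^a`. The tail beyond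
`i + L` is at most the tail beyond `L`, and summing against `i^a` gives `2 R² L^(a+1)`.
All the manipulations are done in `ℝ≥0∞`, where no summability has to be checked.
-/

open scoped ENNReal

namespace OffdiagonalTail

noncomputable def tailSum (f : ℕ → ℝ≥0∞) (M : ℕ) : ℝ≥0∞ :=
  ∑' j, if M < j then f j else 0

theorem tailSum_antitone (f : ℕ → ℝ≥0∞) : Antitone (tailSum f) := fun M N hMN =>
  ENNReal.tsum_le_tsum fun j => by
    split_ifs <;> first | exact le_rfl | exact zero_le | omega

theorem tailSum_le_mul_tsum_mul {f : ℕ → ℝ≥0∞} (hf : AntitoneOn f (Set.Ici 1)) {M : ℕ}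
    [NeZero M] : tailSum f M ≤ M * ∑' k, f (k * M) := by
  have hblock : ∀ k : ℕ, ∀ r : Fin M,
      (if M < k * M + r then f (k * M + r) else 0) ≤ f (k * M) := by
    intro k r
    split_ifs with hlt
    · have hk : 1 ≤ k * M := by
        by_contra! h
        have := r.is_lt
        omega
      exact hf (Set.mem_Ici.2 hk) (Set.mem_Ici.2 (hk.trans (Nat.le_add_right _ _)))
        (Nat.le_add_right _ _)
    · exact zero_le
  calc tailSum f M
      = ∑' k, ∑' r : Fin M, if M < k * M + r then f (k * M + r) else 0 := by
        rw [tailSum, ← (Nat.divModEquiv M).symm.tsum_eq, ENNReal.tsum_prod']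
        rfl
    _ ≤ ∑' k, ∑' _ : Fin M, f (k * M) :=
        ENNReal.tsum_le_tsum fun k => ENNReal.tsum_le_tsum (hblock k)
    _ = M * ∑' k, f (k * M) := by
        simp only [tsum_fintype, Finset.sum_const, Finset.card_univ, Fintype.card_fin,
          nsmul_eq_mul, ENNReal.tsum_mul_left]

theorem tsum_ite_add_lt_le (f : ℕ → ℝ≥0∞) (L : ℕ) :
    ∑' q : ℕ × ℕ, (if q.1 + L < q.2 then f q.1 * f q.2 else 0)
      ≤ (∑' i, f i) * tailSum f L := by
  rw [ENNReal.tsum_prod', ← ENNReal.tsum_mul_right]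
  refine ENNReal.tsum_le_tsum fun i => ?_
  simp only [← mul_ite_zero, ENNReal.tsum_mul_left]
  gcongr
  exact tailSum_antitone f (Nat.le_add_left L i)

theorem tsum_ite_lt_abs_sub_le (f : ℕ → ℝ≥0∞) (L : ℕ) :
    ∑' q : ℕ × ℕ, (if (L : ℤ) < |(q.1 : ℤ) - q.2| then f q.1 * f q.2 else 0)
      ≤ 2 * ((∑' i, f i) * tailSum f L) := by
  set g : ℕ × ℕ → ℝ≥0∞ := fun q => if q.1 + L < q.2 then f q.1 * f q.2 else 0
  have hsplit : ∀ q : ℕ × ℕ, (if (L : ℤ) < |(q.1 : ℤ) - q.2| then f q.1 * f q.2 else 0)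
      ≤ g q + g q.swap := by
    intro q
    split_ifs with hL
    · simp only [g, Prod.fst_swap, Prod.snd_swap, mul_comm (f q.2)]
      rcases lt_abs.1 hL with h | h
      · simp [show q.2 + L < q.1 by omega]
      · simp [show q.1 + L < q.2 by omega]
    · exact zero_le
  calc _ ≤ ∑' q, (g q + g q.swap) := ENNReal.tsum_le_tsum hsplit
    _ = 2 * ∑' q, g q := by
      have hswap : ∑' q : ℕ × ℕ, g q.swap = ∑' q, g q := (Equiv.prodComm ℕ ℕ).tsum_eq g
      rw [ENNReal.tsum_add, hswap, two_mul]
    _ ≤ 2 * ((∑' i, f i) * tailSum f L) := by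
      gcongr
      exact tsum_ite_add_lt_le f L

theorem tailSum_rpow_le {a : ℝ} (ha : a ≤ 0) (M : ℕ) [NeZero M] :
    tailSum (fun n => ENNReal.ofReal ((n : ℝ) ^ a)) M
      ≤ ENNReal.ofReal ((M : ℝ) ^ (a + 1)) * ∑' k : ℕ, ENNReal.ofReal ((k : ℝ) ^ a) := by
  have hanti : AntitoneOn (fun n : ℕ => ENNReal.ofReal ((n : ℝ) ^ a)) (Set.Ici 1) :=
    fun m hm n _ hmn => ENNReal.ofReal_le_ofReal <|
      Real.rpow_le_rpow_of_nonpos (by exact_mod_cast hm) (by exact_mod_cast hmn) ha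
  have hM : (0 : ℝ) < M := by exact_mod_cast (NeZero.pos M)
  calc _ ≤ M * ∑' k : ℕ, ENNReal.ofReal (((k * M : ℕ) : ℝ) ^ a) := tailSum_le_mul_tsum_mul hanti
    _ = ENNReal.ofReal ((M : ℝ) ^ (a + 1)) * ∑' k : ℕ, ENNReal.ofReal ((k : ℝ) ^ a) := by
      simp only [Nat.cast_mul, Real.mul_rpow (Nat.cast_nonneg _) hM.le,
        ENNReal.ofReal_mul' (Real.rpow_nonneg hM.le a), ENNReal.tsum_mul_right]
      rw [Real.rpow_add_one hM.ne', ENNReal.ofReal_mul (Real.rpow_nonneg hM.le a),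
        ENNReal.ofReal_natCast]
      ring

theorem tsum_le_of_tsum_ofReal_le {α : Type*} {f : α → ℝ} (hf : ∀ x, 0 ≤ f x) {c : ℝ}
    (hc : 0 ≤ c) (h : ∑' x, ENNReal.ofReal (f x) ≤ ENNReal.ofReal c) : ∑' x, f x ≤ c := by
  calc ∑' x, f x = (∑' x, ENNReal.ofReal (f x)).toReal := by
        rw [ENNReal.tsum_toReal_eq fun x => ENNReal.ofReal_ne_top]
        simp only [ENNReal.toReal_ofReal (hf _)]
    _ ≤ c := ENNReal.toReal_le_of_le_ofReal hc h

end OffdiagonalTail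

open OffdiagonalTail in
theorem offdiagonal_double_tail_general (d : ℝ) (hd1 : d < 1 / 2) :
    ∃ C : ℝ, 0 < C ∧ ∀ L : ℕ, 1 ≤ L →
      (∑' q : ℕ × ℕ,
        if 1 ≤ q.1 ∧ 1 ≤ q.2 ∧ (L : ℤ) < |(q.1 : ℤ) - (q.2 : ℤ)| then
          (q.1 : ℝ) ^ (2 * d - 2) * (q.2 : ℝ) ^ (2 * d - 2)
        else 0) ≤ C * (L : ℝ) ^ (2 * d - 1) := by
  set a := 2 * d - 2
  have hsum : Summable fun n : ℕ => (n : ℝ) ^ a := Real.summable_nat_rpow.2 (by linarith)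
  set R := ∑' n : ℕ, (n : ℝ) ^ a
  have hR : 0 < R := hsum.tsum_pos (fun n => by positivity) 1 (by simp)
  have hRE : ∑' n : ℕ, ENNReal.ofReal ((n : ℝ) ^ a) = ENNReal.ofReal R :=
    (ENNReal.ofReal_tsum_of_nonneg (fun n => by positivity) hsum).symm
  refine ⟨2 * R ^ 2, by positivity, fun L hL => ?_⟩
  have : NeZero L := ⟨by omega⟩
  refine tsum_le_of_tsum_ofReal_le (fun q => by split_ifs <;> positivity) (by positivity) ?_
  calc _ ≤ ∑' q : ℕ × ℕ, (if (L : ℤ) < |(q.1 : ℤ) - q.2| then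
          ENNReal.ofReal ((q.1 : ℝ) ^ a) * ENNReal.ofReal ((q.2 : ℝ) ^ a) else 0) :=
        ENNReal.tsum_le_tsum fun q => by
          split_ifs <;> simp_all [ENNReal.ofReal_mul (Real.rpow_nonneg (Nat.cast_nonneg _) _)]
    _ ≤ 2 * (ENNReal.ofReal R * (ENNReal.ofReal ((L : ℝ) ^ (a + 1)) * ENNReal.ofReal R)) := by
        refine (tsum_ite_lt_abs_sub_le (fun n => ENNReal.ofReal ((n : ℝ) ^ a)) L).trans ?_
        grw [tailSum_rpow_le (by linarith) L, hRE]
    _ = ENNReal.ofReal (2 * R ^ 2 * (L : ℝ) ^ (2 * d - 1)) := by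
        rw [show 2 * d - 1 = a + 1 by ring, ← ENNReal.ofReal_mul (by positivity),
          ← ENNReal.ofReal_mul hR.le, ← ENNReal.ofReal_ofNat, ← ENNReal.ofReal_mul (by norm_num)]
        ring_nf

/-- **Off-diagonal tail estimate**: for `0 < d < 1/2` there is `C > 0` such that for every
integer `L ≥ 1`, `∑_{i,j≥1, |i−j|>L} i^{2d−2} j^{2d−2} ≤ C L^{2d−1}`. -/
theorem offdiagonal_double_tail (d : ℝ) (hd0 : 0 < d) (hd1 : d < 1 / 2) :
    ∃ C : ℝ, 0 < C ∧ ∀ L : ℕ, 1 ≤ L →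
      (∑' q : ℕ × ℕ,
        if 1 ≤ q.1 ∧ 1 ≤ q.2 ∧ (L : ℤ) < |(q.1 : ℤ) - (q.2 : ℤ)| then
          (q.1 : ℝ) ^ (2 * d - 2) * (q.2 : ℝ) ^ (2 * d - 2)
        else 0) ≤ C * (L : ℝ) ^ (2 * d - 1) :=
  offdiagonal_double_tail_general d hd1
end

section
/- Let (b_j)_{j≥1} be real with B² := Σ_{j≥1} b_j² < 1 and b_j² ≤ c j^{2d−2} for all j ≥ 1, for some c > 0 and 0 < d < 1/2. Define (φ_j)_{j≥0} by φ₀ := 1 and φ_j := b_j² + Σ_{0<k<j} Σ_{0<s_1<…<s_k<j} b_{s_1}² b_{s_2−s_1}² ⋯ b_{s_k−s_{k−1}}² b_{j−s_k}² for j ≥ 1 (equivalently φ_j = b_j² + Σ_{0<i<j} b_i² φ_{j−i}), so that Σ_{j≥0} φ_j z^j = (1 − Σ_{j≥1} b_j² z^j)^{−1} for |z| < 1. Then φ_t = O(t^{2d−2}) as t → ∞ and Σ_{t=0}^∞ φ_t = 1/(1 − B²). -/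
/-- The renewal sequence `(φ_j)` generated by `(b_j²)`: `φ_0 = 1` and
`φ_j = b_j² + ∑_{0<i<j} b_i² φ_{j-i}` for `j ≥ 1`, so that
`∑_{j≥0} φ_j z^j = (1 − ∑_{j≥1} b_j² z^j)^{-1}`. -/
noncomputable def arInvSeq (b : ℕ → ℝ) : ℕ → ℝ
  | 0 => 1
  | (k + 1) =>
      (b (k + 1)) ^ 2 +
        ∑ i ∈ (Finset.Ioo 0 (k + 1)).attach, (b i.1) ^ 2 * arInvSeq b ((k + 1) - i.1)
termination_by k => k
decreasing_by
  have hi := i.2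
  simp only [Finset.mem_Ioo] at hi
  omega

lemma arInvSeq_zero (b : ℕ → ℝ) : arInvSeq b 0 = 1 := by rw [arInvSeq]

lemma arInvSeq_succ (b : ℕ → ℝ) (k : ℕ) :
    arInvSeq b (k + 1) = ∑ i ∈ Finset.Icc 1 (k + 1), (b i) ^ 2 * arInvSeq b (k + 1 - i) := by
  rw [arInvSeq, Finset.sum_attach (Finset.Ioo 0 (k + 1))
    (fun i => (b i) ^ 2 * arInvSeq b (k + 1 - i))]
  have h : Finset.Icc 1 (k + 1) = insert (k + 1) (Finset.Ioo 0 (k + 1)) := by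
    ext x; simp only [Finset.mem_Icc, Finset.mem_insert, Finset.mem_Ioo]; omega
  rw [h, Finset.sum_insert (by simp), Nat.sub_self, arInvSeq_zero, mul_one]

lemma arInvSeq_nonneg (b : ℕ → ℝ) : ∀ t, 0 ≤ arInvSeq b t := by
  intro t
  induction t using Nat.strong_induction_on with
  | _ t ih =>
    match t with
    | 0 => rw [arInvSeq_zero]; norm_num
    | k + 1 =>
      rw [arInvSeq_succ]
      refine Finset.sum_nonneg fun i hi => ?_
      simp only [Finset.mem_Icc] at hi
      exact mul_nonneg (sq_nonneg _) (ih _ (by omega))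

lemma bsq_partial (b : ℕ → ℝ) (hb2 : Summable (fun j : ℕ => (b (j + 1)) ^ 2))
    (s : Finset ℕ) (hs : ∀ i ∈ s, 1 ≤ i) :
    ∑ i ∈ s, (b i) ^ 2 ≤ ∑' j : ℕ, (b (j + 1)) ^ 2 := by
  have h1 : ∑ i ∈ s, (b i) ^ 2 = ∑ j ∈ s.image (· - 1), (b (j + 1)) ^ 2 := by
    rw [Finset.sum_image (fun x hx y hy h => by
      have := hs x hx; have := hs y hy; omega)]
    refine Finset.sum_congr rfl fun i hi => ?_
    have h : i - 1 + 1 = i := by have := hs i hi; omega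
    rw [h]
  rw [h1]
  exact Summable.sum_le_tsum _ (fun j _ => sq_nonneg _) hb2

lemma arInvSeq_partial (b : ℕ → ℝ) (hb2 : Summable (fun j : ℕ => (b (j + 1)) ^ 2))
    (hB : (∑' j : ℕ, (b (j + 1)) ^ 2) < 1) (n : ℕ) :
    ∑ t ∈ Finset.range (n + 1), arInvSeq b t ≤ 1 / (1 - ∑' j : ℕ, (b (j + 1)) ^ 2) := by
  set A := ∑' j : ℕ, (b (j + 1)) ^ 2 with hA
  have hA0 : 0 ≤ A := tsum_nonneg fun j => sq_nonneg _
  have h1A : 0 < 1 - A := by linarith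
  set φ := arInvSeq b with hφ
  have hφ0 : ∀ t, 0 ≤ φ t := arInvSeq_nonneg b
  set P := ∑ t ∈ Finset.range (n + 1), φ t with hPdef
  have hP0 : 0 ≤ P := Finset.sum_nonneg fun t _ => hφ0 t
  have key : P ≤ 1 + A * P := by
    have h0 : P = 1 + ∑ t ∈ Finset.Ico 1 (n + 1), φ t := by
      rw [hPdef, Finset.range_eq_Ico, Finset.sum_eq_sum_Ico_succ_bot (by omega) φ]
      rw [hφ, arInvSeq_zero]
    have h1 : ∑ t ∈ Finset.Ico 1 (n + 1), φ t
        = ∑ t ∈ Finset.Ico 1 (n + 1), ∑ i ∈ Finset.Ico 1 (t + 1), (b i) ^ 2 * φ (t - i) := by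
      refine Finset.sum_congr rfl fun t ht => ?_
      simp only [Finset.mem_Ico] at ht
      obtain ⟨k, rfl⟩ : ∃ k, t = k + 1 := ⟨t - 1, by omega⟩
      rw [hφ, arInvSeq_succ, ← Finset.Ico_add_one_right_eq_Icc]
    have h2 : ∑ t ∈ Finset.Ico 1 (n + 1), ∑ i ∈ Finset.Ico 1 (t + 1), (b i) ^ 2 * φ (t - i)
        = ∑ i ∈ Finset.Ico 1 (n + 1), ∑ t ∈ Finset.Ico i (n + 1), (b i) ^ 2 * φ (t - i) :=
      (Finset.sum_Ico_Ico_comm 1 (n + 1) fun i t => (b i) ^ 2 * φ (t - i)).symm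
    have h3 : ∀ i ∈ Finset.Ico 1 (n + 1),
        ∑ t ∈ Finset.Ico i (n + 1), (b i) ^ 2 * φ (t - i) ≤ (b i) ^ 2 * P := by
      intro i hi
      rw [← Finset.mul_sum]
      refine mul_le_mul_of_nonneg_left ?_ (sq_nonneg _)
      have h4 : ∑ t ∈ Finset.Ico i (n + 1), φ (t - i)
          = ∑ k ∈ Finset.range (n + 1 - i), φ k := by
        rw [Finset.sum_Ico_eq_sum_range]
        exact Finset.sum_congr rfl fun k _ => by rw [Nat.add_sub_cancel_left]
      rw [h4, hPdef]
      exact Finset.sum_le_sum_of_subset_of_nonneg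
        (Finset.range_subset_range.2 (by omega)) (fun t _ _ => hφ0 t)
    calc P = 1 + ∑ t ∈ Finset.Ico 1 (n + 1), φ t := h0
      _ = 1 + ∑ i ∈ Finset.Ico 1 (n + 1), ∑ t ∈ Finset.Ico i (n + 1), (b i) ^ 2 * φ (t - i) := by
          rw [h1, h2]
      _ ≤ 1 + ∑ i ∈ Finset.Ico 1 (n + 1), (b i) ^ 2 * P := by
          gcongr with i hi
          exact h3 i hi
      _ = 1 + (∑ i ∈ Finset.Ico 1 (n + 1), (b i) ^ 2) * P := by rw [Finset.sum_mul]
      _ ≤ 1 + A * P := by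
          gcongr
          exact bsq_partial b hb2 _ (fun i hi => (Finset.mem_Ico.1 hi).1)
  rw [le_div_iff₀ h1A]
  nlinarith

lemma arInvSeq_eq (b : ℕ → ℝ) {t : ℕ} (ht : 1 ≤ t) :
    arInvSeq b t = ∑ i ∈ Finset.Icc 1 t, (b i) ^ 2 * arInvSeq b (t - i) := by
  obtain ⟨k, rfl⟩ : ∃ k, t = k + 1 := ⟨t - 1, by omega⟩
  exact arInvSeq_succ b k

lemma arInvSeq_summable (b : ℕ → ℝ) (hb2 : Summable (fun j : ℕ => (b (j + 1)) ^ 2))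
    (hB : (∑' j : ℕ, (b (j + 1)) ^ 2) < 1) :
    Summable (fun t : ℕ => arInvSeq b t) := by
  refine summable_of_sum_range_le (c := 1 / (1 - ∑' j : ℕ, (b (j + 1)) ^ 2))
    (fun n => arInvSeq_nonneg b n) (fun n => ?_)
  calc ∑ t ∈ Finset.range n, arInvSeq b t
      ≤ ∑ t ∈ Finset.range (n + 1), arInvSeq b t :=
        Finset.sum_le_sum_of_subset_of_nonneg (Finset.range_subset_range.2 (by omega))
          (fun t _ _ => arInvSeq_nonneg b t)
    _ ≤ _ := arInvSeq_partial b hb2 hB n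

lemma arInvSeq_tsum (b : ℕ → ℝ) (hb2 : Summable (fun j : ℕ => (b (j + 1)) ^ 2))
    (hB : (∑' j : ℕ, (b (j + 1)) ^ 2) < 1) :
    (∑' t : ℕ, arInvSeq b t) = 1 / (1 - ∑' j : ℕ, (b (j + 1)) ^ 2) := by
  classical
  have hA0 : 0 ≤ ∑' j : ℕ, (b (j + 1)) ^ 2 := tsum_nonneg fun j => sq_nonneg _
  have h1A : 0 < 1 - ∑' j : ℕ, (b (j + 1)) ^ 2 := by linarith
  have hsum : Summable (fun t => arInvSeq b t) := arInvSeq_summable b hb2 hB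
  set a : ℕ → ℝ := fun j => if j = 0 then 0 else (b j) ^ 2 with ha
  have hasucc : ∀ n : ℕ, a (n + 1) = (b (n + 1)) ^ 2 := fun n => by simp [ha]
  have ha0 : ∀ j, 0 ≤ a j := fun j => by
    rw [ha]; dsimp only; split <;> [exact le_refl 0; exact sq_nonneg _]
  have hsa : Summable a := by
    rw [← summable_nat_add_iff 1]
    simpa only [hasucc] using hb2
  have hta : (∑' j, a j) = ∑' j : ℕ, (b (j + 1)) ^ 2 := by
    rw [Summable.tsum_eq_zero_add hsa]
    simp only [hasucc]
    simp [ha]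
  have hconv : ∀ t : ℕ, ∑ k ∈ Finset.range (t + 1), a k * arInvSeq b (t - k)
      = if t = 0 then 0 else arInvSeq b t := by
    intro t
    match t with
    | 0 => simp [ha, arInvSeq_zero]
    | m + 1 =>
      rw [if_neg (by omega), Finset.range_eq_Ico,
        Finset.sum_eq_sum_Ico_succ_bot (by omega)]
      have h0 : a 0 * arInvSeq b (m + 1 - 0) = 0 := by simp [ha]
      rw [h0, zero_add, show (0 + 1) = 1 from rfl, Finset.Ico_add_one_right_eq_Icc, arInvSeq_succ b m]
      refine Finset.sum_congr rfl fun i hi => ?_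
      simp only [Finset.mem_Icc] at hi
      rw [ha]
      simp only []
      rw [if_neg (by omega)]
  have hna : Summable fun x => ‖a x‖ := by
    simpa only [Real.norm_eq_abs, abs_of_nonneg (ha0 _)] using hsa
  have hnφ : Summable fun x => ‖arInvSeq b x‖ := by
    simpa only [Real.norm_eq_abs, abs_of_nonneg (arInvSeq_nonneg b _)] using hsum
  have cauchy := tsum_mul_tsum_eq_tsum_sum_range_of_summable_norm hna hnφ
  rw [hta] at cauchy
  have hg : Summable (fun t => if t = 0 then (0:ℝ) else arInvSeq b t) := by
    rw [← summable_nat_add_iff 1]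
    simp only [Nat.add_eq_zero, one_ne_zero, and_false, if_false]
    exact (summable_nat_add_iff 1).2 hsum
  have hrhs : (∑' t : ℕ, ∑ k ∈ Finset.range (t + 1), a k * arInvSeq b (t - k))
      = (∑' t, arInvSeq b t) - 1 := by
    rw [tsum_congr hconv, Summable.tsum_eq_zero_add hg, Summable.tsum_eq_zero_add hsum, arInvSeq_zero]
    norm_num
  rw [hrhs] at cauchy
  have hT : (∑' j : ℕ, (b (j + 1)) ^ 2) * (∑' t, arInvSeq b t)
      = (∑' t, arInvSeq b t) - 1 := cauchy
  rw [eq_div_iff (ne_of_gt h1A)]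
  nlinarith [hT]

/-- **(6.73)**: if `B² = ∑_{j≥1} b_j² < 1` and `b_j² ≤ c j^{2d−2}` with `0 < d < 1/2`, then
the coefficients `φ_j` of `(1 − ∑ b_j² z^j)^{-1}` satisfy `φ_t = O(t^{2d−2})` and
`∑_{t≥0} φ_t = 1/(1 − B²)`. -/
theorem arInvSeq_decay
    (b : ℕ → ℝ) (hb2 : Summable (fun j : ℕ => (b (j + 1)) ^ 2))
    (hB : (∑' j : ℕ, (b (j + 1)) ^ 2) < 1)
    (c d : ℝ) (hc : 0 < c) (hd0 : 0 < d) (hd1 : d < 1 / 2)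
    (hdecay : ∀ j : ℕ, 1 ≤ j → (b j) ^ 2 ≤ c * (j : ℝ) ^ (2 * d - 2)) :
    (∃ C : ℝ, 0 < C ∧ ∀ t : ℕ, 1 ≤ t → |arInvSeq b t| ≤ C * (t : ℝ) ^ (2 * d - 2)) ∧
    Summable (fun t : ℕ => arInvSeq b t) ∧
    (∑' t : ℕ, arInvSeq b t) = 1 / (1 - ∑' j : ℕ, (b (j + 1)) ^ 2) := by
  classical
  set e := 2 * d - 2 with he
  have he0 : e < 0 := by rw [he]; linarith
  have he2 : (-2 : ℝ) ≤ e := by rw [he]; linarith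
  set A := ∑' j : ℕ, (b (j + 1)) ^ 2 with hA
  have hA0 : 0 ≤ A := tsum_nonneg fun j => sq_nonneg _
  have h1A : 0 < 1 - A := by linarith
  have hφ0 : ∀ t, 0 ≤ arInvSeq b t := arInvSeq_nonneg b
  -- constants
  have hhalf : (0:ℝ) < (1 + A) / 2 := by linarith
  set r := Real.sqrt ((1 + A) / 2) with hr
  have hrpos : 0 < r := Real.sqrt_pos.2 hhalf
  have hrsq : r ^ 2 = (1 + A) / 2 := Real.sq_sqrt hhalf.le
  have hr1 : r < 1 := by
    have h := Real.sqrt_lt_sqrt (show (0:ℝ) ≤ (1 + A) / 2 by linarith)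
      (show (1 + A) / 2 < 1 by linarith)
    rwa [Real.sqrt_one] at h
  set ε := 1 - r with hε
  have hε0 : 0 < ε := by rw [hε]; linarith
  have hε1 : ε < 1 := by rw [hε]; linarith
  set S := 1 / (1 - A) with hS
  have hS0 : 0 < S := div_pos one_pos h1A
  set ρ := 2 * A / (1 + A) with hρ
  have hρ0 : 0 ≤ ρ := by positivity
  have hρ1 : ρ < 1 := by rw [hρ, div_lt_one (by linarith)]; linarith
  have hAr : A * r ^ e ≤ ρ := by
    have h1 : r ^ e ≤ r ^ (-2 : ℝ) := Real.rpow_le_rpow_of_exponent_ge hrpos hr1.le he2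
    have h2 : r ^ (-2 : ℝ) = (r ^ 2)⁻¹ := by
      rw [show (-2 : ℝ) = -((2:ℕ):ℝ) by norm_num, Real.rpow_neg hrpos.le, Real.rpow_natCast]
    have h3 : r ^ (-2:ℝ) = 2 / (1 + A) := by
      rw [h2, hrsq]; field_simp
    calc A * r ^ e ≤ A * r ^ (-2:ℝ) := mul_le_mul_of_nonneg_left h1 hA0
      _ = A * (2 / (1 + A)) := by rw [h3]
      _ = ρ := by rw [hρ]; ring
  have hεe : 0 < ε ^ e := Real.rpow_pos_of_pos hε0 e
  set C := (c * S * ε ^ e + 1) / (1 - ρ) with hC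
  have hC0 : 0 < C := div_pos (by positivity) (by linarith)
  have hCineq : ρ * C + c * S * ε ^ e ≤ C := by
    have hCC : C * (1 - ρ) = c * S * ε ^ e + 1 := by
      rw [hC, div_mul_cancel₀ _ (ne_of_gt (by linarith : (0:ℝ) < 1 - ρ))]
    nlinarith
  -- main induction
  have main : ∀ t : ℕ, 1 ≤ t → arInvSeq b t ≤ C * (t : ℝ) ^ e := by
    intro t
    induction t using Nat.strong_induction_on with
    | _ t ih =>
      intro ht
      have ht0 : (0:ℝ) < (t:ℝ) := by exact_mod_cast Nat.lt_of_lt_of_le Nat.zero_lt_one ht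
      have hte : 0 < (t:ℝ) ^ e := Real.rpow_pos_of_pos ht0 e
      have hεt : ε * t < t := by nlinarith
      rw [arInvSeq_eq b ht,
        ← Finset.sum_filter_add_sum_filter_not (Finset.Icc 1 t) (fun i : ℕ => (i:ℝ) < ε * t)]
      have hb1 : ∑ i ∈ (Finset.Icc 1 t).filter (fun i : ℕ => (i:ℝ) < ε * t),
          (b i) ^ 2 * arInvSeq b (t - i) ≤ ρ * C * (t:ℝ) ^ e := by
        have step : ∀ i ∈ (Finset.Icc 1 t).filter (fun i : ℕ => (i:ℝ) < ε * t),
            (b i) ^ 2 * arInvSeq b (t - i) ≤ (b i) ^ 2 * (C * r ^ e * (t:ℝ) ^ e) := by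
          intro i hi
          simp only [Finset.mem_filter, Finset.mem_Icc] at hi
          obtain ⟨⟨hi1, hi2⟩, hi3⟩ := hi
          have hilt : i < t := by
            have : (i:ℝ) < (t:ℝ) := lt_trans hi3 hεt
            exact_mod_cast this
          have hIH := ih (t - i) (by omega) (by omega)
          have hcast : ((t - i : ℕ) : ℝ) = (t:ℝ) - (i:ℝ) := by
            rw [Nat.cast_sub hilt.le]
          have hrt : r * (t:ℝ) = (t:ℝ) - ε * t := by rw [hε]; ring
          have hge : r * (t:ℝ) ≤ ((t - i : ℕ) : ℝ) := by
            rw [hcast, hrt]; linarith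
          have hmono : ((t - i : ℕ) : ℝ) ^ e ≤ (r * (t:ℝ)) ^ e :=
            Real.rpow_le_rpow_of_nonpos (by positivity) hge he0.le
          have hmul : (r * (t:ℝ)) ^ e = r ^ e * (t:ℝ) ^ e :=
            Real.mul_rpow hrpos.le ht0.le
          calc (b i) ^ 2 * arInvSeq b (t - i)
              ≤ (b i) ^ 2 * (C * ((t - i : ℕ):ℝ) ^ e) :=
                mul_le_mul_of_nonneg_left hIH (sq_nonneg _)
            _ ≤ (b i) ^ 2 * (C * (r ^ e * (t:ℝ) ^ e)) := by
                refine mul_le_mul_of_nonneg_left ?_ (sq_nonneg _)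
                rw [← hmul]
                exact mul_le_mul_of_nonneg_left hmono hC0.le
            _ = (b i) ^ 2 * (C * r ^ e * (t:ℝ) ^ e) := by ring
        have hre : 0 < r ^ e := Real.rpow_pos_of_pos hrpos e
        calc ∑ i ∈ (Finset.Icc 1 t).filter (fun i : ℕ => (i:ℝ) < ε * t),
              (b i) ^ 2 * arInvSeq b (t - i)
            ≤ ∑ i ∈ (Finset.Icc 1 t).filter (fun i : ℕ => (i:ℝ) < ε * t),
              (b i) ^ 2 * (C * r ^ e * (t:ℝ) ^ e) := Finset.sum_le_sum step
          _ = (∑ i ∈ (Finset.Icc 1 t).filter (fun i : ℕ => (i:ℝ) < ε * t), (b i) ^ 2)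
              * (C * r ^ e * (t:ℝ) ^ e) := by rw [← Finset.sum_mul]
          _ ≤ A * (C * r ^ e * (t:ℝ) ^ e) := by
              refine mul_le_mul_of_nonneg_right ?_ (by positivity)
              exact bsq_partial b hb2 _ (fun i hi => by
                simp only [Finset.mem_filter, Finset.mem_Icc] at hi; exact hi.1.1)
          _ = (A * r ^ e) * (C * (t:ℝ) ^ e) := by ring
          _ ≤ ρ * (C * (t:ℝ) ^ e) :=
              mul_le_mul_of_nonneg_right hAr (mul_pos hC0 hte).le
          _ = ρ * C * (t:ℝ) ^ e := by ring
      have hb2' : ∑ i ∈ (Finset.Icc 1 t).filter (fun i : ℕ => ¬ (i:ℝ) < ε * t),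
          (b i) ^ 2 * arInvSeq b (t - i) ≤ c * S * ε ^ e * (t:ℝ) ^ e := by
        have hεte : 0 < (ε * (t:ℝ)) ^ e := Real.rpow_pos_of_pos (by positivity) e
        have hterm : ∀ i ∈ (Finset.Icc 1 t).filter (fun i : ℕ => ¬ (i:ℝ) < ε * t),
            (b i) ^ 2 * arInvSeq b (t - i) ≤ (c * (ε ^ e * (t:ℝ) ^ e)) * arInvSeq b (t - i) := by
          intro i hi
          simp only [Finset.mem_filter, Finset.mem_Icc, not_lt] at hi
          obtain ⟨⟨hi1, hi2⟩, hi3⟩ := hi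
          have hbd : (b i) ^ 2 ≤ c * (i:ℝ) ^ e := hdecay i hi1
          have hmono : (i:ℝ) ^ e ≤ (ε * (t:ℝ)) ^ e :=
            Real.rpow_le_rpow_of_nonpos (by positivity) hi3 he0.le
          have hmul : (ε * (t:ℝ)) ^ e = ε ^ e * (t:ℝ) ^ e :=
            Real.mul_rpow hε0.le ht0.le
          refine mul_le_mul_of_nonneg_right ?_ (arInvSeq_nonneg b _)
          calc (b i) ^ 2 ≤ c * (i:ℝ) ^ e := hbd
            _ ≤ c * (ε * (t:ℝ)) ^ e := mul_le_mul_of_nonneg_left hmono hc.le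
            _ = c * (ε ^ e * (t:ℝ) ^ e) := by rw [hmul]
        have hsump : ∑ i ∈ (Finset.Icc 1 t).filter (fun i : ℕ => ¬ (i:ℝ) < ε * t),
            arInvSeq b (t - i) ≤ S := by
          have h1 : ∑ i ∈ (Finset.Icc 1 t).filter (fun i : ℕ => ¬ (i:ℝ) < ε * t),
              arInvSeq b (t - i) ≤ ∑ i ∈ Finset.Icc 1 t, arInvSeq b (t - i) :=
            Finset.sum_le_sum_of_subset_of_nonneg (Finset.filter_subset _ _)
              (fun i _ _ => arInvSeq_nonneg b _)
          have h2 : ∑ i ∈ Finset.Icc 1 t, arInvSeq b (t - i)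
              = ∑ j ∈ Finset.range t, arInvSeq b j := by
            rw [← Finset.Ico_add_one_right_eq_Icc, Finset.sum_Ico_eq_sum_range]
            have h3 : ∀ k, t - (1 + k) = t - 1 - k := fun k => by omega
            simp_rw [h3]
            rw [show t + 1 - 1 = t from rfl]
            exact Finset.sum_range_reflect (fun j => arInvSeq b j) t
          have h4 : ∑ j ∈ Finset.range t, arInvSeq b j
              ≤ ∑ j ∈ Finset.range (t + 1), arInvSeq b j :=
            Finset.sum_le_sum_of_subset_of_nonneg (Finset.range_subset_range.2 (by omega))
              (fun j _ _ => arInvSeq_nonneg b j)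
          have h5 := arInvSeq_partial b hb2 hB t
          rw [hS, hA]
          linarith
        calc ∑ i ∈ (Finset.Icc 1 t).filter (fun i : ℕ => ¬ (i:ℝ) < ε * t),
              (b i) ^ 2 * arInvSeq b (t - i)
            ≤ ∑ i ∈ (Finset.Icc 1 t).filter (fun i : ℕ => ¬ (i:ℝ) < ε * t),
              (c * (ε ^ e * (t:ℝ) ^ e)) * arInvSeq b (t - i) := Finset.sum_le_sum hterm
          _ = (c * (ε ^ e * (t:ℝ) ^ e)) * ∑ i ∈ (Finset.Icc 1 t).filter
              (fun i : ℕ => ¬ (i:ℝ) < ε * t), arInvSeq b (t - i) := by rw [← Finset.mul_sum]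
          _ ≤ (c * (ε ^ e * (t:ℝ) ^ e)) * S :=
              mul_le_mul_of_nonneg_left hsump (by positivity)
          _ = c * S * ε ^ e * (t:ℝ) ^ e := by ring
      calc (∑ i ∈ (Finset.Icc 1 t).filter (fun i : ℕ => (i:ℝ) < ε * t),
              (b i) ^ 2 * arInvSeq b (t - i))
            + ∑ i ∈ (Finset.Icc 1 t).filter (fun i : ℕ => ¬ (i:ℝ) < ε * t),
              (b i) ^ 2 * arInvSeq b (t - i)
          ≤ ρ * C * (t:ℝ) ^ e + c * S * ε ^ e * (t:ℝ) ^ e := add_le_add hb1 hb2'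
        _ = (ρ * C + c * S * ε ^ e) * (t:ℝ) ^ e := by ring
        _ ≤ C * (t:ℝ) ^ e := mul_le_mul_of_nonneg_right hCineq hte.le
  refine ⟨⟨C, hC0, fun t ht => ?_⟩, arInvSeq_summable b hb2 hB, arInvSeq_tsum b hb2 hB⟩
  rw [abs_of_nonneg (arInvSeq_nonneg b t)]
  exact main t ht
end
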